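/- arXiv:1206.2501 — 9 statements merged into one kernel-verified Lean document; each statement's English description precedes it below -/
import Mathlib

section
/- Let ξ₁,...,ξₙ be independent centered random variables with ξᵢ ≤ B almost surely for some B > 0, and let σ² = ∑ᵢ E[ξᵢ²]. Define b_i(λ) = E[ξᵢ e^{λξᵢ}]/E[e^{λξᵢ}] and B_n(λ) = ∑ᵢ b_i(λ). Then for all λ ≥ 0, B_n(λ) ≤ σ² (e^{Bλ} − 1)/B. -/
/-!
For a centered `X ≤ B` write `E[X e^{lX}] = E[X (e^{lX} - 1)]`. The integrand is nonnegative, and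
since `x ↦ (e^{lx} - 1) / x` is a secant slope of the convex function `x ↦ e^{lx}` it is
nondecreasing, so `x (e^{lx} - 1) ≤ x² (e^{lB} - 1) / B` for `x ≤ B`. Finally
`E[e^{lX}] ≥ 1 + l E[X] = 1`, so dividing by it only decreases the nonnegative numerator.
-/

open MeasureTheory ProbabilityTheory Real

lemma mul_exp_mul_sub_one_nonneg {l : ℝ} (hl : 0 ≤ l) (x : ℝ) : 0 ≤ x * (exp (l * x) - 1) := by
  rcases le_total 0 x with hx | hx
  · exact mul_nonneg hx (sub_nonneg.2 (one_le_exp (mul_nonneg hl hx)))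
  · exact mul_nonneg_of_nonpos_of_nonpos hx
      (sub_nonpos.2 (exp_le_one_iff.2 (mul_nonpos_of_nonneg_of_nonpos hl hx)))

lemma mul_exp_mul_sub_one_le {l B x : ℝ} (hB : B ≠ 0) (hx : x ≤ B) :
    x * (exp (l * x) - 1) ≤ x ^ 2 * ((exp (B * l) - 1) / B) := by
  rcases eq_or_ne x 0 with rfl | hx0
  · simp
  have hconvex : ConvexOn ℝ Set.univ (fun y : ℝ => exp (l * y)) :=
    convexOn_exp.comp_linearMap (LinearMap.mul ℝ ℝ l)
  have hslope : (exp (l * x) - exp (l * 0)) / (x - 0) ≤ (exp (l * B) - exp (l * 0)) / (B - 0) :=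
    hconvex.secant_mono trivial trivial trivial hx0 hB hx
  rw [mul_zero, exp_zero, sub_zero, sub_zero, mul_comm l B] at hslope
  calc x * (exp (l * x) - 1) = x ^ 2 * ((exp (l * x) - 1) / x) := by field_simp
    _ ≤ x ^ 2 * ((exp (B * l) - 1) / B) := by gcongr

/-- The paper's `b_i(λ)`: the mean of `X` under the tilted measure `e^{lX} dμ / ∫ e^{lX} dμ`. -/
noncomputable def tiltedMean {Ω : Type*} [MeasurableSpace Ω] (μ : Measure Ω) (X : Ω → ℝ)
    (l : ℝ) : ℝ :=
  (∫ ω, X ω * exp (l * X ω) ∂μ) / ∫ ω, exp (l * X ω) ∂μ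

section Centered

variable {Ω : Type*} [MeasurableSpace Ω] {μ : Measure Ω} {X : Ω → ℝ} {l : ℝ}

lemma one_le_integral_exp_mul [IsProbabilityMeasure μ] (hX : Integrable X μ)
    (hX0 : ∫ ω, X ω ∂μ = 0) (hexp : Integrable (fun ω => exp (l * X ω)) μ) :
    1 ≤ ∫ ω, exp (l * X ω) ∂μ := by
  have hlin : Integrable (fun ω => 1 + l * X ω) μ := (integrable_const 1).add (hX.const_mul l)
  calc (1 : ℝ) = ∫ ω, (1 + l * X ω) ∂μ := by
        rw [integral_add (integrable_const 1) (hX.const_mul l), integral_const_mul, hX0]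
        simp
    _ ≤ ∫ ω, exp (l * X ω) ∂μ :=
        integral_mono hlin hexp fun ω => by linarith [add_one_le_exp (l * X ω)]

lemma integral_mul_exp_mul_eq (hX : Integrable X μ) (hX0 : ∫ ω, X ω ∂μ = 0)
    (hXexp : Integrable (fun ω => X ω * exp (l * X ω)) μ) :
    ∫ ω, X ω * exp (l * X ω) ∂μ = ∫ ω, X ω * (exp (l * X ω) - 1) ∂μ := by
  simp_rw [mul_sub, mul_one]
  rw [integral_sub hXexp hX, hX0, sub_zero]

lemma tiltedMean_le [IsProbabilityMeasure μ] {B : ℝ} (hB : B ≠ 0) (hl : 0 ≤ l)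
    (hX : Integrable X μ) (hX0 : ∫ ω, X ω ∂μ = 0) (hXB : ∀ᵐ ω ∂μ, X ω ≤ B)
    (hX2 : Integrable (fun ω => X ω ^ 2) μ) (hexp : Integrable (fun ω => exp (l * X ω)) μ)
    (hXexp : Integrable (fun ω => X ω * exp (l * X ω)) μ) :
    tiltedMean μ X l ≤ (∫ ω, X ω ^ 2 ∂μ) * ((exp (B * l) - 1) / B) := by
  have hsub : Integrable (fun ω => X ω * (exp (l * X ω) - 1)) μ := by
    convert hXexp.sub hX using 1
    ext ω
    simp only [Pi.sub_apply, mul_sub, mul_one]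
  have hnum : ∫ ω, X ω * exp (l * X ω) ∂μ = ∫ ω, X ω * (exp (l * X ω) - 1) ∂μ :=
    integral_mul_exp_mul_eq hX hX0 hXexp
  have hnum_nonneg : 0 ≤ ∫ ω, X ω * exp (l * X ω) ∂μ :=
    hnum ▸ integral_nonneg fun ω => mul_exp_mul_sub_one_nonneg hl (X ω)
  calc tiltedMean μ X l ≤ ∫ ω, X ω * exp (l * X ω) ∂μ :=
        div_le_self hnum_nonneg (one_le_integral_exp_mul hX hX0 hexp)
    _ ≤ ∫ ω, X ω ^ 2 * ((exp (B * l) - 1) / B) ∂μ := by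
        rw [hnum]
        refine integral_mono_ae hsub (hX2.mul_const _) ?_
        filter_upwards [hXB] with ω hω using mul_exp_mul_sub_one_le hB hω
    _ = (∫ ω, X ω ^ 2 ∂μ) * ((exp (B * l) - 1) / B) := integral_mul_const _ _

end Centered

theorem tilted_mean_upper_bound_general {Ω : Type*} [MeasurableSpace Ω] (μ : Measure Ω)
    [IsProbabilityMeasure μ] (n : ℕ) (ξ : Fin n → Ω → ℝ) (B : ℝ) (hB : 0 < B)
    (hint : ∀ i, Integrable (ξ i) μ) (hmean : ∀ i, ∫ ω, ξ i ω ∂μ = 0)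
    (hbdd : ∀ i, ∀ᵐ ω ∂μ, ξ i ω ≤ B)
    (hint2 : ∀ i, Integrable (fun ω => (ξ i ω) ^ 2) μ)
    (hinte : ∀ i, ∀ l : ℝ, 0 ≤ l → Integrable (fun ω => Real.exp (l * ξ i ω)) μ)
    (hintxe : ∀ i, ∀ l : ℝ, 0 ≤ l →
      Integrable (fun ω => ξ i ω * Real.exp (l * ξ i ω)) μ) :
    ∀ l : ℝ, 0 ≤ l →
      ∑ i, (∫ ω, ξ i ω * Real.exp (l * ξ i ω) ∂μ) / (∫ ω, Real.exp (l * ξ i ω) ∂μ)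
        ≤ (∑ i, ∫ ω, (ξ i ω) ^ 2 ∂μ) * (Real.exp (B * l) - 1) / B := by
  intro l hl
  calc ∑ i, tiltedMean μ (ξ i) l
      ≤ ∑ i, (∫ ω, ξ i ω ^ 2 ∂μ) * ((exp (B * l) - 1) / B) :=
        Finset.sum_le_sum fun i _ => tiltedMean_le hB.ne' hl (hint i) (hmean i) (hbdd i)
          (hint2 i) (hinte i l hl) (hintxe i l hl)
    _ = (∑ i, ∫ ω, ξ i ω ^ 2 ∂μ) * (exp (B * l) - 1) / B := by
        rw [← Finset.sum_mul, mul_div_assoc]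

/-- Upper bound on the tilted mean `B_n(λ)` for sums of independent centered
random variables bounded above by `B`. -/
theorem tilted_mean_upper_bound {Ω : Type*} [MeasurableSpace Ω] (μ : Measure Ω)
    [IsProbabilityMeasure μ] (n : ℕ) (ξ : Fin n → Ω → ℝ) (B : ℝ) (hB : 0 < B)
    (hmeas : ∀ i, Measurable (ξ i))
    (hindep : iIndepFun ξ μ)
    (hint : ∀ i, Integrable (ξ i) μ) (hmean : ∀ i, ∫ ω, ξ i ω ∂μ = 0)
    (hbdd : ∀ i, ∀ᵐ ω ∂μ, ξ i ω ≤ B)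
    (hint2 : ∀ i, Integrable (fun ω => (ξ i ω) ^ 2) μ)
    (hinte : ∀ i, ∀ l : ℝ, 0 ≤ l → Integrable (fun ω => Real.exp (l * ξ i ω)) μ)
    (hintxe : ∀ i, ∀ l : ℝ, 0 ≤ l →
      Integrable (fun ω => ξ i ω * Real.exp (l * ξ i ω)) μ) :
    ∀ l : ℝ, 0 ≤ l →
      ∑ i, (∫ ω, ξ i ω * Real.exp (l * ξ i ω) ∂μ) / (∫ ω, Real.exp (l * ξ i ω) ∂μ)
        ≤ (∑ i, ∫ ω, (ξ i ω) ^ 2 ∂μ) * (Real.exp (B * l) - 1) / B :=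
  tilted_mean_upper_bound_general μ n ξ B hB hint hmean hbdd hint2 hinte hintxe
end

section
/- Let ξ₁,...,ξₙ be independent centered random variables with ξᵢ ≤ 1 almost surely, and let σ² = ∑ᵢ E[ξᵢ²]. Then the cumulant function Ψ_n(λ) = ∑ᵢ log E[e^{λξᵢ}] satisfies, for all λ ≥ 0, Ψ_n(λ) ≤ n·log( (1/(1+σ²/n))·e^{−λσ²/n} + (σ²/n/(1+σ²/n))·e^{λ} ). -/
/-!
For `x ≤ 1` and `v ≥ 0`, the quadratic in `x` that is tangent to `exp (l * x)` at `x = -v` and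
meets it at `x = 1` dominates `exp (l * x)` on `(-∞, 1]`, because `(exp y - 1 - y) / y ^ 2` is
nondecreasing. Integrating against a centred `ξ` with `E ξ² = v` gives Bennett's bound
`E exp (l ξ) ≤ bennettBound l v`. Since `log ∘ bennettBound l` is concave on `[0, ∞)`, Jensen's
inequality over the `n` second moments bounds the sum of the cumulants by `n` times its value at
their mean `σ² / n`.
-/

open MeasureTheory ProbabilityTheory Real Finset

namespace Real

lemma exp_le_one_add_add_sq_div_two_of_nonpos {y : ℝ} (hy : y ≤ 0) :
    exp y ≤ 1 + y + y ^ 2 / 2 := by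
  have h := quadratic_le_exp_of_nonneg (neg_nonneg.2 hy)
  have h1 : exp y * exp (-y) = 1 := by rw [← exp_add, add_neg_cancel, exp_zero]
  nlinarith [exp_pos y]

lemma hasSum_exp_sub_one_sub (y : ℝ) :
    HasSum (fun n : ℕ => y ^ (n + 2) / (n + 2).factorial) (exp y - 1 - y) := by
  have h := (hasSum_nat_add_iff' 2).mpr (exp_eq_exp_ℝ ▸ NormedSpace.expSeries_div_hasSum_exp y)
  simpa [sum_range_succ, sub_sub] using h

/-- Monotonicity of `(exp y - 1 - y) / y ^ 2`, cleared of denominators. -/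
lemma exp_sub_one_sub_mul_sq_le {y u : ℝ} (hu : 0 ≤ u) (hyu : y ≤ u) :
    (exp y - 1 - y) * u ^ 2 ≤ (exp u - 1 - u) * y ^ 2 := by
  rcases le_or_gt 0 y with hy | hy
  · refine hasSum_le (fun n => ?_) ((hasSum_exp_sub_one_sub y).mul_right _)
      ((hasSum_exp_sub_one_sub u).mul_right _)
    rw [div_mul_eq_mul_div, div_mul_eq_mul_div]
    gcongr ?_ / _
    calc y ^ (n + 2) * u ^ 2 = y ^ n * (y * u) ^ 2 := by ring
      _ ≤ u ^ n * (y * u) ^ 2 := by gcongr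
      _ = u ^ (n + 2) * y ^ 2 := by ring
  · nlinarith [mul_le_mul_of_nonneg_right (exp_le_one_add_add_sq_div_two_of_nonpos hy.le)
      (sq_nonneg u), mul_le_mul_of_nonneg_right (quadratic_le_exp_of_nonneg hu) (sq_nonneg y)]

lemma exp_neg_add_le_one_add_two_mul_mul_exp {s t : ℝ} (hs : 0 ≤ s) (ht : 0 ≤ t) :
    exp (-s) + 2 * t + 2 * s + 2 * s * t + s ^ 2 * t ≤ (1 + 2 * t) * exp s := by
  have hsinh : 2 * s ≤ exp s - exp (-s) := by
    have := self_le_sinh_iff.2 hs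
    rw [sinh_eq] at this
    linarith
  nlinarith [mul_le_mul_of_nonneg_left (quadratic_le_exp_of_nonneg hs)
    (by positivity : 0 ≤ 2 * t)]

lemma exp_le_one_add_add_mul_sq {y u : ℝ} (hu : 0 < u) (hyu : y ≤ u) :
    exp y ≤ 1 + y + (exp u - 1 - u) / u ^ 2 * y ^ 2 := by
  have h : exp y - 1 - y ≤ (exp u - 1 - u) * y ^ 2 / u ^ 2 := by
    rw [le_div_iff₀ (by positivity)]
    exact exp_sub_one_sub_mul_sq_le hu.le hyu
  rw [div_mul_eq_mul_div]
  linarith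

end Real

lemma ConcaveOn.sum_le_card_mul_map_average {ι E : Type*} [AddCommGroup E] [Module ℝ E]
    {s : Finset ι} {C : Set E} {f : E → ℝ} {p : ι → E} (hf : ConcaveOn ℝ C f)
    (hp : ∀ i ∈ s, p i ∈ C) :
    ∑ i ∈ s, f (p i) ≤ #s * f ((#s : ℝ)⁻¹ • ∑ i ∈ s, p i) := by
  rcases s.eq_empty_or_nonempty with rfl | hs
  · simp
  have hcard : (0 : ℝ) < #s := by exact_mod_cast hs.card_pos
  have h := hf.le_map_sum (w := fun _ => (#s : ℝ)⁻¹) (fun _ _ => by positivity)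
    (by simp [hcard.ne']) hp
  rw [← smul_sum, ← smul_sum, smul_eq_mul] at h
  rwa [inv_mul_le_iff₀ hcard] at h

/-- The moment generating function at `l` of the centred law with mass `t / (1 + t)` at `1` and
`1 / (1 + t)` at `-t`. -/
noncomputable def bennettBound (l t : ℝ) : ℝ := 1 / (1 + t) * exp (-l * t) + t / (1 + t) * exp l

lemma exp_mul_le_bennett_quadratic {l v x : ℝ} (hl : 0 ≤ l) (hv : 0 ≤ v) (hx : x ≤ 1) :
    exp (l * x) ≤ exp (-l * v) * (1 + l * (x + v)
      + (exp (l * (1 + v)) - 1 - l * (1 + v)) / (1 + v) ^ 2 * (x + v) ^ 2) := by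
  rcases hl.eq_or_lt with rfl | hl
  · simp
  have h := exp_le_one_add_add_mul_sq (by positivity : 0 < l * (1 + v))
    (mul_le_mul_of_nonneg_left (by linarith : x + v ≤ 1 + v) hl.le)
  have hcoeff : (exp (l * (1 + v)) - 1 - l * (1 + v)) / (l * (1 + v)) ^ 2 * (l * (x + v)) ^ 2
      = (exp (l * (1 + v)) - 1 - l * (1 + v)) / (1 + v) ^ 2 * (x + v) ^ 2 := by
    field_simp
  calc exp (l * x) = exp (-l * v) * exp (l * (x + v)) := by rw [← exp_add]; congr 1; ring
    _ ≤ _ := by rw [← hcoeff]; gcongr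

section Bennett

variable {Ω : Type*} [MeasurableSpace Ω] {μ : Measure Ω} [IsProbabilityMeasure μ] {X : Ω → ℝ}
  {l : ℝ}

theorem mgf_le_bennettBound (hl : 0 ≤ l) (hint : Integrable X μ) (hmean : ∫ ω, X ω ∂μ = 0)
    (hbdd : ∀ᵐ ω ∂μ, X ω ≤ 1) (hint2 : Integrable (fun ω => X ω ^ 2) μ) :
    mgf X μ l ≤ bennettBound l (∫ ω, X ω ^ 2 ∂μ) := by
  set v := ∫ ω, X ω ^ 2 ∂μ
  have hv : 0 ≤ v := integral_nonneg fun ω => sq_nonneg _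
  set C := (exp (l * (1 + v)) - 1 - l * (1 + v)) / (1 + v) ^ 2 with hC
  set q : Ω → ℝ := fun ω => exp (-l * v) * ((1 + l * v + C * v ^ 2) + (l + 2 * C * v) * X ω
    + C * X ω ^ 2)
  have hq : Integrable q μ :=
    (((integrable_const _).add (hint.const_mul _)).add (hint2.const_mul C)).const_mul _
  calc mgf X μ l ≤ ∫ ω, q ω ∂μ := by
        refine integral_mono_ae (integrable_exp_mul_of_le l 1 hl hint.aemeasurable hbdd) hq ?_
        filter_upwards [hbdd] with ω hω
        refine (exp_mul_le_bennett_quadratic hl hv hω).trans_eq ?_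
        ring
    _ = exp (-l * v) * (1 + l * v + C * v ^ 2 + C * v) := by
        have hlin : Integrable (fun ω => 1 + l * v + C * v ^ 2 + (l + 2 * C * v) * X ω) μ :=
          (integrable_const _).add (hint.const_mul _)
        rw [integral_const_mul, integral_add hlin (hint2.const_mul C),
          integral_add (integrable_const _) (hint.const_mul _), integral_const, integral_const_mul,
          integral_const_mul, hmean]
        simp only [probReal_univ, one_smul]
        ring
    _ = bennettBound l v := by
        have hexp : exp l = exp (-l * v) * exp (l * (1 + v)) := by rw [← exp_add]; congr 1; ring
        rw [bennettBound, hexp, hC]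
        field_simp
        ring

theorem cgf_le_log_bennettBound (hl : 0 ≤ l) (hint : Integrable X μ) (hmean : ∫ ω, X ω ∂μ = 0)
    (hbdd : ∀ᵐ ω ∂μ, X ω ≤ 1) (hint2 : Integrable (fun ω => X ω ^ 2) μ) :
    cgf X μ l ≤ log (bennettBound l (∫ ω, X ω ^ 2 ∂μ)) :=
  log_le_log (mgf_pos (integrable_exp_mul_of_le l 1 hl hint.aemeasurable hbdd))
    (mgf_le_bennettBound hl hint hmean hbdd hint2)

end Bennett

lemma bennettBound_eq_div (l t : ℝ) :
    bennettBound l t = (exp (-(l * t)) + t * exp l) / (1 + t) := by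
  rw [bennettBound, neg_mul]
  ring

lemma exp_neg_mul_add_mul_exp_pos (l : ℝ) {t : ℝ} (ht : 0 ≤ t) : 0 < exp (-(l * t)) + t * exp l :=
  add_pos_of_pos_of_nonneg (exp_pos _) (mul_nonneg ht (exp_pos _).le)

section Concavity

variable {l : ℝ}

/-- With `f t = exp (-(l * t)) + t * exp l` this is `f ^ 2 ≤ (1 + t) ^ 2 * (f' ^ 2 - f * f'')`,
i.e. `(log f)'' ≤ -1 / (1 + t) ^ 2`. -/
lemma sq_exp_neg_mul_add_mul_exp_le (hl : 0 ≤ l) {t : ℝ} (ht : 0 ≤ t) :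
    (exp (-(l * t)) + t * exp l) ^ 2 ≤ (1 + t) ^ 2 * ((exp l - l * exp (-(l * t))) ^ 2
      - l ^ 2 * exp (-(l * t)) * (exp (-(l * t)) + t * exp l)) := by
  set a := exp (-(l * t))
  have hb : exp l = a * exp (l * (1 + t)) := by rw [← exp_add]; congr 1; ring
  have hinv : exp (l * (1 + t)) * exp (-(l * (1 + t))) = 1 := by
    rw [← exp_add, add_neg_cancel, exp_zero]
  have h := exp_neg_add_le_one_add_two_mul_mul_exp (by positivity : 0 ≤ l * (1 + t)) ht
  rw [hb]
  linear_combination a ^ 2 * exp (l * (1 + t)) * h - a ^ 2 * hinv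

lemma concaveOn_log_exp_neg_mul_add_mul_exp_sub_log (hl : 0 ≤ l) :
    ConcaveOn ℝ (Set.Ici 0) fun t => log (exp (-(l * t)) + t * exp l) - log (1 + t) := by
  set f : ℝ → ℝ := fun t => exp (-(l * t)) + t * exp l
  set f' : ℝ → ℝ := fun t => exp l - l * exp (-(l * t))
  have hf_pos : ∀ t, 0 ≤ t → 0 < f t := fun t ht => exp_neg_mul_add_mul_exp_pos l ht
  have hexp : ∀ t, HasDerivAt (fun t => exp (-(l * t))) (-l * exp (-(l * t))) t := fun t => by
    simpa [mul_comm] using ((hasDerivAt_id t).const_mul l).neg.exp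
  have hf : ∀ t, HasDerivAt f (f' t) t := fun t =>
    ((hexp t).add ((hasDerivAt_id t).mul_const (exp l))).congr_deriv (by simp only [f']; ring)
  have hf' : ∀ t, HasDerivAt f' (l ^ 2 * exp (-(l * t))) t := fun t =>
    (((hexp t).const_mul l).const_sub (exp l)).congr_deriv (by ring)
  have h1t : ∀ t : ℝ, 0 ≤ t → 1 + t ≠ 0 := fun t ht => (add_pos_of_pos_of_nonneg one_pos ht).ne'
  refine concaveOn_of_hasDerivWithinAt2_nonpos (convex_Ici 0)
    (f' := fun t => f' t / f t - 1 / (1 + t))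
    (f'' := fun t => (l ^ 2 * exp (-(l * t)) * f t - f' t * f' t) / f t ^ 2 + 1 / (1 + t) ^ 2)
    (.sub (.log (by fun_prop) fun t ht => (hf_pos t ht).ne') (.log (by fun_prop) h1t)) ?_ ?_ ?_
    <;> rw [interior_Ici] <;> intro t (ht : 0 < t)
  · have hlog1p := ((hasDerivAt_id' t).const_add 1).log (h1t t ht.le)
    exact (((hf t).log (hf_pos t ht.le).ne').sub (hlog1p.congr_deriv (by ring))).hasDerivWithinAt
  · have h := ((hf' t).div (hf t) (hf_pos t ht.le).ne').sub
      ((hasDerivAt_const t (1 : ℝ)).div ((hasDerivAt_id' t).const_add 1) (h1t t ht.le))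
    exact (h.congr_deriv (by ring)).hasDerivWithinAt
  · have hft := hf_pos t ht.le
    rw [← le_neg_iff_add_nonpos_left, ← neg_div, div_le_div_iff₀ (by positivity) (by positivity)]
    linear_combination sq_exp_neg_mul_add_mul_exp_le hl ht.le

lemma concaveOn_log_bennettBound (hl : 0 ≤ l) :
    ConcaveOn ℝ (Set.Ici 0) fun t => log (bennettBound l t) :=
  (concaveOn_log_exp_neg_mul_add_mul_exp_sub_log hl).congr fun t (ht : 0 ≤ t) => by
    rw [bennettBound_eq_div, log_div (exp_neg_mul_add_mul_exp_pos l ht).ne' (by positivity)]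

end Concavity

theorem cumulant_hoeffding_bound_general {Ω : Type*} [MeasurableSpace Ω] (μ : Measure Ω)
    [IsProbabilityMeasure μ] (n : ℕ) (ξ : Fin n → Ω → ℝ) (σ : ℝ)
    (hint : ∀ i, Integrable (ξ i) μ) (hmean : ∀ i, ∫ ω, ξ i ω ∂μ = 0)
    (hbdd : ∀ i, ∀ᵐ ω ∂μ, ξ i ω ≤ 1)
    (hint2 : ∀ i, Integrable (fun ω => (ξ i ω) ^ 2) μ)
    (hσ : σ ^ 2 = ∑ i, ∫ ω, (ξ i ω) ^ 2 ∂μ) :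
    ∀ l : ℝ, 0 ≤ l →
      ∑ i, Real.log (∫ ω, Real.exp (l * ξ i ω) ∂μ)
        ≤ n * Real.log (1 / (1 + σ ^ 2 / n) * Real.exp (-l * (σ ^ 2 / n))
            + (σ ^ 2 / n) / (1 + σ ^ 2 / n) * Real.exp l) := by
  intro l hl
  calc ∑ i, cgf (ξ i) μ l ≤ ∑ i, log (bennettBound l (∫ ω, ξ i ω ^ 2 ∂μ)) :=
        sum_le_sum fun i _ => cgf_le_log_bennettBound hl (hint i) (hmean i) (hbdd i) (hint2 i)
    _ ≤ n * log (bennettBound l ((n : ℝ)⁻¹ • ∑ i, ∫ ω, ξ i ω ^ 2 ∂μ)) := by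
        simpa only [card_univ, Fintype.card_fin] using
          (concaveOn_log_bennettBound hl).sum_le_card_mul_map_average (s := univ)
            fun i _ => Set.mem_Ici.2 (integral_nonneg fun ω => sq_nonneg (ξ i ω))
    _ = _ := by rw [← hσ, smul_eq_mul, inv_mul_eq_div, bennettBound]

/-- Hoeffding-type upper bound on the cumulant function for sums of independent
centered random variables bounded above by 1. -/
theorem cumulant_hoeffding_bound {Ω : Type*} [MeasurableSpace Ω] (μ : Measure Ω)
    [IsProbabilityMeasure μ] (n : ℕ) (ξ : Fin n → Ω → ℝ) (σ : ℝ)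
    (hmeas : ∀ i, Measurable (ξ i))
    (hindep : iIndepFun ξ μ)
    (hint : ∀ i, Integrable (ξ i) μ) (hmean : ∀ i, ∫ ω, ξ i ω ∂μ = 0)
    (hbdd : ∀ i, ∀ᵐ ω ∂μ, ξ i ω ≤ 1)
    (hint2 : ∀ i, Integrable (fun ω => (ξ i ω) ^ 2) μ)
    (hσ : σ ^ 2 = ∑ i, ∫ ω, (ξ i ω) ^ 2 ∂μ) :
    ∀ l : ℝ, 0 ≤ l →
      ∑ i, Real.log (∫ ω, Real.exp (l * ξ i ω) ∂μ)
        ≤ n * Real.log (1 / (1 + σ ^ 2 / n) * Real.exp (-l * (σ ^ 2 / n))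
            + (σ ^ 2 / n) / (1 + σ ^ 2 / n) * Real.exp l) :=
  cumulant_hoeffding_bound_general μ n ξ σ hint hmean hbdd hint2 hσ
end

section
/- For fixed λ ≥ 0, the function f(λ,t) = log( (1/(1+t))·e^{−λt} + (t/(1+t))·e^{λ} ) is concave in t on [0,∞), and consequently f(λ,t) ≤ (e^{λ} − 1 − λ)·t for all t ≥ 0. -/
/-!
Write `f(t) = log g(t) - log (1 + t)` with `g(t) = e^{-λt} + t e^λ`. Concavity amounts to
`g² ≤ (1 + t)² (g'² - g g'')`. Substituting `a = e^{-λt}`, `E = e^{λ(1+t)}`, `s = λ(1+t)` and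
`y = 1 + tE` (so that `e^λ = aE`, `g = ay` and `(1+t) g' = a (y + E - 1 - s)`), this becomes
`y² + s² y ≤ (y + E - 1 - s)²`, which follows from `E - 1 - s ≥ s²/2`. The linear bound is the
tangent line of `f` at `0`, where `f(0) = 0` and `f'(0) = e^λ - 1 - λ`.
-/

open Real Set

lemma ConcaveOn.le_add_mul_sub_of_hasDerivWithinAt {S : Set ℝ} {f : ℝ → ℝ} {f' x y : ℝ}
    (hf : ConcaveOn ℝ S f) (hx : x ∈ S) (hy : y ∈ S) (hxy : x ≤ y)
    (hf' : HasDerivWithinAt f f' S x) : f y ≤ f x + f' * (y - x) := by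
  rcases hxy.eq_or_lt with rfl | hxy
  · simp
  have hslope := hf.slope_le_of_hasDerivWithinAt hx hy hxy hf'
  rw [slope_def_field, div_le_iff₀ (sub_pos.2 hxy)] at hslope
  linarith

lemma sq_add_sq_mul_le_sq_of_quadratic_le {y s E : ℝ} (hy : 0 ≤ y)
    (hE : 1 + s + s ^ 2 / 2 ≤ E) : y ^ 2 + s ^ 2 * y ≤ (y + E - 1 - s) ^ 2 := by
  nlinarith [mul_le_mul_of_nonneg_left hE hy, sq_nonneg (E - 1 - s)]

noncomputable def bennettNum (l t : ℝ) : ℝ := exp (-l * t) + t * exp l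

noncomputable def bennettLog (l t : ℝ) : ℝ := log (bennettNum l t) - log (1 + t)

lemma bennettNum_pos (l : ℝ) {t : ℝ} (ht : 0 ≤ t) : 0 < bennettNum l t := by
  unfold bennettNum
  positivity

lemma hasDerivAt_exp_neg_mul (l x : ℝ) :
    HasDerivAt (fun t => exp (-l * t)) (-l * exp (-l * x)) x := by
  simpa [mul_comm] using ((hasDerivAt_id x).const_mul (-l)).exp

lemma hasDerivAt_bennettNum (l x : ℝ) :
    HasDerivAt (bennettNum l) (exp l - l * exp (-l * x)) x := by
  have h := (hasDerivAt_exp_neg_mul l x).add ((hasDerivAt_id x).mul_const (exp l))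
  exact h.congr_deriv (by ring)

lemma hasDerivAt_bennettLog (l : ℝ) {x : ℝ} (hx : 0 ≤ x) :
    HasDerivAt (bennettLog l) ((exp l - l * exp (-l * x)) / bennettNum l x - 1 / (1 + x)) x := by
  have hlog1 : HasDerivAt (fun t => log (1 + t)) (1 / (1 + x)) x := by
    simpa using ((hasDerivAt_id x).const_add 1).log (by positivity)
  exact ((hasDerivAt_bennettNum l x).log (bennettNum_pos l hx).ne').sub hlog1

lemma hasDerivAt_bennettLog_deriv (l : ℝ) {x : ℝ} (hx : 0 ≤ x) :
    HasDerivAt (fun t => (exp l - l * exp (-l * t)) / bennettNum l t - 1 / (1 + t))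
      ((l ^ 2 * exp (-l * x) * bennettNum l x - (exp l - l * exp (-l * x)) ^ 2) /
          bennettNum l x ^ 2 + 1 / (1 + x) ^ 2) x := by
  have hnum : HasDerivAt (fun t => exp l - l * exp (-l * t)) (l ^ 2 * exp (-l * x)) x :=
    (((hasDerivAt_exp_neg_mul l x).const_mul l).const_sub (exp l)).congr_deriv (by ring)
  have hinv : HasDerivAt (fun t => 1 / (1 + t)) (-(1 / (1 + x) ^ 2)) x := by
    simp only [one_div]
    exact (((hasDerivAt_id' x).const_add 1).inv (by positivity)).congr_deriv (by ring)
  have h := (hnum.div (hasDerivAt_bennettNum l x) (bennettNum_pos l hx).ne').sub hinv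
  exact h.congr_deriv (by ring)

lemma bennettNum_sq_le (l : ℝ) {x : ℝ} (hl : 0 ≤ l) (hx : 0 ≤ x) :
    bennettNum l x ^ 2 ≤
      (1 + x) ^ 2 * ((exp l - l * exp (-l * x)) ^ 2 - l ^ 2 * exp (-l * x) * bennettNum l x) := by
  set a := exp (-l * x)
  set E := exp (l * (1 + x))
  set s := l * (1 + x)
  have hexp : exp l = a * E := by rw [← exp_add]; ring_nf
  have hy : 0 ≤ 1 + x * E := by positivity
  have key := sq_add_sq_mul_le_sq_of_quadratic_le hy
    (quadratic_le_exp_of_nonneg (mul_nonneg hl (by linarith) : 0 ≤ s))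
  have hlhs : bennettNum l x ^ 2 = a ^ 2 * (1 + x * E) ^ 2 := by
    rw [bennettNum, hexp]; ring
  have hrhs : (1 + x) ^ 2 * ((exp l - l * a) ^ 2 - l ^ 2 * a * bennettNum l x) =
      a ^ 2 * ((1 + x * E + E - 1 - s) ^ 2 - s ^ 2 * (1 + x * E)) := by
    rw [bennettNum, hexp]; ring
  rw [hlhs, hrhs]
  gcongr
  linarith

lemma bennettLog_deriv2_nonpos (l : ℝ) {x : ℝ} (hl : 0 ≤ l) (hx : 0 ≤ x) :
    (l ^ 2 * exp (-l * x) * bennettNum l x - (exp l - l * exp (-l * x)) ^ 2) /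
        bennettNum l x ^ 2 + 1 / (1 + x) ^ 2 ≤ 0 := by
  have hg := bennettNum_pos l hx
  rw [div_add_div _ _ (by positivity) (by positivity)]
  apply div_nonpos_of_nonpos_of_nonneg _ (by positivity)
  nlinarith [bennettNum_sq_le l hl hx]

lemma concaveOn_bennettLog {l : ℝ} (hl : 0 ≤ l) : ConcaveOn ℝ (Ici 0) (bennettLog l) := by
  refine concaveOn_of_hasDerivWithinAt2_nonpos (convex_Ici 0)
    (fun x hx => (hasDerivAt_bennettLog l hx).continuousAt.continuousWithinAt)
    (fun x hx => (hasDerivAt_bennettLog l (interior_subset hx)).hasDerivWithinAt)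
    (fun x hx => (hasDerivAt_bennettLog_deriv l (interior_subset hx)).hasDerivWithinAt)
    (fun x hx => bennettLog_deriv2_nonpos l hl (interior_subset hx))

lemma bennettLog_eq (l : ℝ) {t : ℝ} (ht : 0 ≤ t) :
    bennettLog l t = log (1 / (1 + t) * exp (-l * t) + t / (1 + t) * exp l) := by
  have h1t : 1 + t ≠ 0 := by positivity
  rw [bennettLog, ← log_div (bennettNum_pos l ht).ne' h1t, bennettNum]
  congr 1
  field_simp

/-- Concavity in `t` of the log of Bennett's MGF bound, and the resulting linear
upper bound. -/
theorem bennett_log_concave_linear_bound (l : ℝ) (hl : 0 ≤ l) :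
    ConcaveOn ℝ (Set.Ici 0)
      (fun t : ℝ => Real.log (1 / (1 + t) * Real.exp (-l * t) + t / (1 + t) * Real.exp l)) ∧
    ∀ t : ℝ, 0 ≤ t →
      Real.log (1 / (1 + t) * Real.exp (-l * t) + t / (1 + t) * Real.exp l)
        ≤ (Real.exp l - 1 - l) * t := by
  have hEq : EqOn (bennettLog l)
      (fun t => log (1 / (1 + t) * exp (-l * t) + t / (1 + t) * exp l)) (Ici 0) :=
    fun t ht => bennettLog_eq l ht
  have hconc := (concaveOn_bennettLog hl).congr hEq
  refine ⟨hconc, fun t ht => ?_⟩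
  have hderiv : HasDerivWithinAt (bennettLog l) (exp l - 1 - l) (Ici 0) 0 := by
    refine (hasDerivAt_bennettLog l le_rfl).hasDerivWithinAt.congr_deriv ?_
    simp [bennettNum]
    ring
  have htangent := hconc.le_add_mul_sub_of_hasDerivWithinAt self_mem_Ici ht ht
    (hderiv.congr_of_mem hEq.symm self_mem_Ici)
  simpa using htangent
end

section
/- Let ξ be a centered real random variable with ξ ≤ B a.s. and E[|ξ|³] ≤ B·E[ξ²]. Define f(λ) = E[ξ²e^{λξ}]·E[e^{λξ}] − (E[ξe^{λξ}])². Then f is convex on [0,∞) (its second derivative f''(λ) = E[ξ⁴e^{λξ}]E[e^{λξ}] − (E[ξ²e^{λξ}])² is nonnegative), and consequently f(λ) ≥ E[ξ²] + λ·E[ξ³] ≥ (1 − Bλ)·E[ξ²] for all λ ≥ 0. -/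
open MeasureTheory Real

lemma combo_int {Ω : Type*} [MeasurableSpace Ω] (μ : Measure Ω) [IsProbabilityMeasure μ]
    (f g h : Ω → ℝ) (hf : Integrable f μ) (hg : Integrable g μ) (hh : Integrable h μ) :
    Integrable (fun z : Ω × Ω =>
      (1/2) * (f z.1 * g z.2) + (1/2) * (g z.1 * f z.2) - h z.1 * h z.2) (μ.prod μ) :=
  ((((hf.mul_prod hg).const_mul _).add ((hg.mul_prod hf).const_mul _)).sub (hh.mul_prod hh))

lemma combo_val {Ω : Type*} [MeasurableSpace Ω] (μ : Measure Ω) [IsProbabilityMeasure μ]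
    (f g h : Ω → ℝ) (hf : Integrable f μ) (hg : Integrable g μ) (hh : Integrable h μ) :
    ∫ z, ((1/2) * (f z.1 * g z.2) + (1/2) * (g z.1 * f z.2) - h z.1 * h z.2) ∂(μ.prod μ)
      = (∫ x, f x ∂μ) * (∫ x, g x ∂μ) - (∫ x, h x ∂μ) ^ 2 := by
  have hA : Integrable (fun z : Ω × Ω =>
      (1/2) * (f z.1 * g z.2) + (1/2) * (g z.1 * f z.2)) (μ.prod μ) :=
    ((hf.mul_prod hg).const_mul _).add ((hg.mul_prod hf).const_mul _)
  have hA1 : Integrable (fun z : Ω × Ω => (1/2) * (f z.1 * g z.2)) (μ.prod μ) :=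
    (hf.mul_prod hg).const_mul _
  have hA2 : Integrable (fun z : Ω × Ω => (1/2) * (g z.1 * f z.2)) (μ.prod μ) :=
    (hg.mul_prod hf).const_mul _
  rw [integral_sub hA (hh.mul_prod hh), integral_add hA1 hA2,
    integral_const_mul, integral_const_mul, integral_prod_mul, integral_prod_mul,
    integral_prod_mul]
  ring

lemma combo2_val {Ω : Type*} [MeasurableSpace Ω] (μ : Measure Ω) [IsProbabilityMeasure μ]
    (f g h : Ω → ℝ) (hf : Integrable f μ) (hg : Integrable g μ) (hh : Integrable h μ) :
    Integrable (fun z : Ω × Ω =>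
      (1/2) * (f z.1 + f z.2 - g z.1 * h z.2 - h z.1 * g z.2)) (μ.prod μ) ∧
    ∫ z, ((1/2) * (f z.1 + f z.2 - g z.1 * h z.2 - h z.1 * g z.2)) ∂(μ.prod μ)
      = ∫ x, f x ∂μ - (∫ x, g x ∂μ) * (∫ x, h x ∂μ) := by
  have h1 : Integrable (fun z : Ω × Ω => f z.1) (μ.prod μ) := by
    have := hf.mul_prod (integrable_const (1:ℝ) (μ := μ)); simpa using this
  have h2 : Integrable (fun z : Ω × Ω => f z.2) (μ.prod μ) := by
    have := (integrable_const (1:ℝ) (μ := μ)).mul_prod hf; simpa using this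
  have h12 : Integrable (fun z : Ω × Ω => f z.1 + f z.2) (μ.prod μ) := h1.add h2
  have h3 : Integrable (fun z : Ω × Ω => f z.1 + f z.2 - g z.1 * h z.2) (μ.prod μ) :=
    h12.sub (hg.mul_prod hh)
  have h4 : Integrable (fun z : Ω × Ω =>
      f z.1 + f z.2 - g z.1 * h z.2 - h z.1 * g z.2) (μ.prod μ) := h3.sub (hh.mul_prod hg)
  refine ⟨h4.const_mul _, ?_⟩
  have e1 : ∫ z : Ω × Ω, f z.1 ∂(μ.prod μ) = ∫ x, f x ∂μ := by
    have := integral_prod_mul (μ := μ) (ν := μ) f (fun _ => (1:ℝ)); simpa using this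
  have e2 : ∫ z : Ω × Ω, f z.2 ∂(μ.prod μ) = ∫ x, f x ∂μ := by
    have := integral_prod_mul (μ := μ) (ν := μ) (fun _ => (1:ℝ)) f; simpa using this
  rw [integral_const_mul, integral_sub h3 (hh.mul_prod hg),
    integral_sub h12 (hg.mul_prod hh), integral_add h1 h2, e1, e2,
    integral_prod_mul, integral_prod_mul]
  ring

/-- Convexity of the numerator of the tilted variance and the resulting lower bounds. -/
theorem tilted_variance_numerator_convex {Ω : Type*} [MeasurableSpace Ω] (μ : Measure Ω)
    [IsProbabilityMeasure μ] (ξ : Ω → ℝ) (B : ℝ) (hB : 0 < B)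
    (hmeas : Measurable ξ) (hint : Integrable ξ μ) (hmean : ∫ ω, ξ ω ∂μ = 0)
    (hbdd : ∀ᵐ ω ∂μ, ξ ω ≤ B)
    (hint2 : Integrable (fun ω => (ξ ω) ^ 2) μ)
    (hint3 : Integrable (fun ω => |ξ ω| ^ 3) μ)
    (hmom3 : ∫ ω, |ξ ω| ^ 3 ∂μ ≤ B * ∫ ω, (ξ ω) ^ 2 ∂μ)
    (hinte : ∀ l : ℝ, 0 ≤ l → Integrable (fun ω => Real.exp (l * ξ ω)) μ)
    (hintxe : ∀ l : ℝ, 0 ≤ l → Integrable (fun ω => ξ ω * Real.exp (l * ξ ω)) μ)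
    (hintx2e : ∀ l : ℝ, 0 ≤ l → Integrable (fun ω => (ξ ω) ^ 2 * Real.exp (l * ξ ω)) μ)
    (hintx3 : Integrable (fun ω => (ξ ω) ^ 3) μ)
    (hintx4e : ∀ l : ℝ, 0 ≤ l → Integrable (fun ω => (ξ ω) ^ 4 * Real.exp (l * ξ ω)) μ) :
    ConvexOn ℝ (Set.Ici 0)
      (fun l : ℝ => (∫ ω, (ξ ω) ^ 2 * Real.exp (l * ξ ω) ∂μ) * (∫ ω, Real.exp (l * ξ ω) ∂μ)
        - (∫ ω, ξ ω * Real.exp (l * ξ ω) ∂μ) ^ 2) ∧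
    (∀ l : ℝ, 0 ≤ l →
      (∫ ω, (ξ ω) ^ 4 * Real.exp (l * ξ ω) ∂μ) * (∫ ω, Real.exp (l * ξ ω) ∂μ)
        - (∫ ω, (ξ ω) ^ 2 * Real.exp (l * ξ ω) ∂μ) ^ 2 ≥ 0) ∧
    (∀ l : ℝ, 0 ≤ l →
      (∫ ω, (ξ ω) ^ 2 ∂μ) + l * ∫ ω, (ξ ω) ^ 3 ∂μ
        ≤ (∫ ω, (ξ ω) ^ 2 * Real.exp (l * ξ ω) ∂μ) * (∫ ω, Real.exp (l * ξ ω) ∂μ)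
          - (∫ ω, ξ ω * Real.exp (l * ξ ω) ∂μ) ^ 2) ∧
    (∀ l : ℝ, 0 ≤ l →
      (1 - B * l) * ∫ ω, (ξ ω) ^ 2 ∂μ ≤ (∫ ω, (ξ ω) ^ 2 ∂μ) + l * ∫ ω, (ξ ω) ^ 3 ∂μ) := by
  -- the symmetrized integrand for f
  have hPeq : ∀ l : ℝ,
      (fun z : Ω × Ω => (1/2) * (ξ z.1 - ξ z.2)^2 * Real.exp (l * (ξ z.1 + ξ z.2)))
      = (fun z : Ω × Ω =>
          (1/2) * ((fun ω => (ξ ω)^2 * Real.exp (l * ξ ω)) z.1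
              * (fun ω => Real.exp (l * ξ ω)) z.2)
          + (1/2) * ((fun ω => Real.exp (l * ξ ω)) z.1
              * (fun ω => (ξ ω)^2 * Real.exp (l * ξ ω)) z.2)
          - (fun ω => ξ ω * Real.exp (l * ξ ω)) z.1
            * (fun ω => ξ ω * Real.exp (l * ξ ω)) z.2) := by
    intro l; funext z; simp only []
    rw [mul_add l, Real.exp_add]; ring
  have hPint : ∀ l : ℝ, 0 ≤ l → Integrable
      (fun z : Ω × Ω => (1/2) * (ξ z.1 - ξ z.2)^2 * Real.exp (l * (ξ z.1 + ξ z.2)))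
      (μ.prod μ) := by
    intro l hl
    rw [hPeq l]
    exact combo_int μ _ _ _ (hintx2e l hl) (hinte l hl) (hintxe l hl)
  have hPval : ∀ l : ℝ, 0 ≤ l →
      ∫ z, (1/2) * (ξ z.1 - ξ z.2)^2 * Real.exp (l * (ξ z.1 + ξ z.2)) ∂(μ.prod μ)
      = (∫ ω, (ξ ω) ^ 2 * Real.exp (l * ξ ω) ∂μ) * (∫ ω, Real.exp (l * ξ ω) ∂μ)
        - (∫ ω, ξ ω * Real.exp (l * ξ ω) ∂μ) ^ 2 := by
    intro l hl
    rw [hPeq l]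
    exact combo_val μ _ _ _ (hintx2e l hl) (hinte l hl) (hintxe l hl)
  refine ⟨?_, ?_, ?_, ?_⟩
  · -- convexity
    refine ⟨convex_Ici 0, ?_⟩
    intro x hx y hy a b ha hb hab
    simp only [smul_eq_mul]
    have hx0 : (0:ℝ) ≤ x := hx
    have hy0 : (0:ℝ) ≤ y := hy
    have hxy : (0:ℝ) ≤ a * x + b * y := add_nonneg (mul_nonneg ha hx0) (mul_nonneg hb hy0)
    rw [← hPval x hx0, ← hPval y hy0, ← hPval _ hxy]
    calc ∫ z, (1/2) * (ξ z.1 - ξ z.2)^2 * Real.exp ((a*x+b*y) * (ξ z.1 + ξ z.2)) ∂(μ.prod μ)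
        ≤ ∫ z, (a * ((1/2) * (ξ z.1 - ξ z.2)^2 * Real.exp (x * (ξ z.1 + ξ z.2)))
            + b * ((1/2) * (ξ z.1 - ξ z.2)^2 * Real.exp (y * (ξ z.1 + ξ z.2)))) ∂(μ.prod μ) := by
          apply integral_mono (hPint _ hxy)
            (((hPint x hx0).const_mul a).add ((hPint y hy0).const_mul b))
          intro z
          have hw : (0:ℝ) ≤ (1/2) * (ξ z.1 - ξ z.2)^2 := by positivity
          have hexp : Real.exp ((a*x+b*y) * (ξ z.1 + ξ z.2))
              ≤ a * Real.exp (x * (ξ z.1 + ξ z.2)) + b * Real.exp (y * (ξ z.1 + ξ z.2)) := by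
            rw [show (a*x+b*y) * (ξ z.1 + ξ z.2)
                = a * (x * (ξ z.1 + ξ z.2)) + b * (y * (ξ z.1 + ξ z.2)) by ring]
            have := convexOn_exp.2 (Set.mem_univ (x * (ξ z.1 + ξ z.2)))
              (Set.mem_univ (y * (ξ z.1 + ξ z.2))) ha hb hab
            simpa [smul_eq_mul] using this
          calc (1/2) * (ξ z.1 - ξ z.2)^2 * Real.exp ((a*x+b*y) * (ξ z.1 + ξ z.2))
              ≤ (1/2) * (ξ z.1 - ξ z.2)^2
                * (a * Real.exp (x * (ξ z.1 + ξ z.2)) + b * Real.exp (y * (ξ z.1 + ξ z.2))) :=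
                mul_le_mul_of_nonneg_left hexp hw
            _ = a * ((1/2) * (ξ z.1 - ξ z.2)^2 * Real.exp (x * (ξ z.1 + ξ z.2)))
                + b * ((1/2) * (ξ z.1 - ξ z.2)^2 * Real.exp (y * (ξ z.1 + ξ z.2))) := by ring
      _ = a * ∫ z, (1/2) * (ξ z.1 - ξ z.2)^2 * Real.exp (x * (ξ z.1 + ξ z.2)) ∂(μ.prod μ)
          + b * ∫ z, (1/2) * (ξ z.1 - ξ z.2)^2 * Real.exp (y * (ξ z.1 + ξ z.2)) ∂(μ.prod μ) := by
          rw [integral_add ((hPint x hx0).const_mul a) ((hPint y hy0).const_mul b),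
            integral_const_mul, integral_const_mul]
  · -- second derivative nonneg (Cauchy–Schwarz)
    intro l hl
    have hP2eq :
        (fun z : Ω × Ω => (1/2) * ((ξ z.1)^2 - (ξ z.2)^2)^2 * Real.exp (l * (ξ z.1 + ξ z.2)))
        = (fun z : Ω × Ω =>
            (1/2) * ((fun ω => (ξ ω)^4 * Real.exp (l * ξ ω)) z.1
                * (fun ω => Real.exp (l * ξ ω)) z.2)
            + (1/2) * ((fun ω => Real.exp (l * ξ ω)) z.1
                * (fun ω => (ξ ω)^4 * Real.exp (l * ξ ω)) z.2)
            - (fun ω => (ξ ω)^2 * Real.exp (l * ξ ω)) z.1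
              * (fun ω => (ξ ω)^2 * Real.exp (l * ξ ω)) z.2) := by
      funext z; simp only []
      rw [mul_add l, Real.exp_add]; ring
    have hval : ∫ z, (1/2) * ((ξ z.1)^2 - (ξ z.2)^2)^2 * Real.exp (l * (ξ z.1 + ξ z.2)) ∂(μ.prod μ)
        = (∫ ω, (ξ ω) ^ 4 * Real.exp (l * ξ ω) ∂μ) * (∫ ω, Real.exp (l * ξ ω) ∂μ)
          - (∫ ω, (ξ ω) ^ 2 * Real.exp (l * ξ ω) ∂μ) ^ 2 := by
      rw [hP2eq]
      exact combo_val μ _ _ _ (hintx4e l hl) (hinte l hl) (hintx2e l hl)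
    have hnn : 0 ≤ ∫ z, (1/2) * ((ξ z.1)^2 - (ξ z.2)^2)^2
        * Real.exp (l * (ξ z.1 + ξ z.2)) ∂(μ.prod μ) :=
      integral_nonneg fun z => by positivity
    linarith [hval ▸ hnn]
  · -- linear lower bound
    intro l hl
    have hQeq :
        (fun z : Ω × Ω => (1/2) * (ξ z.1 - ξ z.2)^2 * (1 + l * (ξ z.1 + ξ z.2)))
        = (fun z : Ω × Ω =>
            ((1/2) * ((fun ω => (ξ ω)^2) z.1 * (fun _ : Ω => (1:ℝ)) z.2)
              + (1/2) * ((fun _ : Ω => (1:ℝ)) z.1 * (fun ω => (ξ ω)^2) z.2)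
              - (fun ω => ξ ω) z.1 * (fun ω => ξ ω) z.2)
            + l * ((1/2) * ((fun ω => (ξ ω)^3) z.1 + (fun ω => (ξ ω)^3) z.2
              - (fun ω => (ξ ω)^2) z.1 * (fun ω => ξ ω) z.2
              - (fun ω => ξ ω) z.1 * (fun ω => (ξ ω)^2) z.2))) := by
      funext z; simp only []; ring
    have hC1int := combo_int μ (fun ω => (ξ ω)^2) (fun _ => (1:ℝ)) ξ hint2
      (integrable_const 1) hint
    have hC1val := combo_val μ (fun ω => (ξ ω)^2) (fun _ => (1:ℝ)) ξ hint2
      (integrable_const 1) hint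
    obtain ⟨hRint, hRval⟩ := combo2_val μ (fun ω => (ξ ω)^3) (fun ω => (ξ ω)^2) ξ
      hintx3 hint2 hint
    have hQint : Integrable
        (fun z : Ω × Ω => (1/2) * (ξ z.1 - ξ z.2)^2 * (1 + l * (ξ z.1 + ξ z.2))) (μ.prod μ) := by
      rw [hQeq]; exact hC1int.add (hRint.const_mul l)
    have hQval : ∫ z, (1/2) * (ξ z.1 - ξ z.2)^2 * (1 + l * (ξ z.1 + ξ z.2)) ∂(μ.prod μ)
        = (∫ ω, (ξ ω) ^ 2 ∂μ) + l * ∫ ω, (ξ ω) ^ 3 ∂μ := by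
      rw [hQeq, integral_add hC1int (hRint.const_mul l), integral_const_mul, hC1val, hRval,
        hmean]
      simp
    have hmono : ∫ z, (1/2) * (ξ z.1 - ξ z.2)^2 * (1 + l * (ξ z.1 + ξ z.2)) ∂(μ.prod μ)
        ≤ ∫ z, (1/2) * (ξ z.1 - ξ z.2)^2 * Real.exp (l * (ξ z.1 + ξ z.2)) ∂(μ.prod μ) := by
      apply integral_mono hQint (hPint l hl)
      intro z
      have h1 : (0:ℝ) ≤ (ξ z.1 - ξ z.2)^2
          * (Real.exp (l * (ξ z.1 + ξ z.2)) - (1 + l * (ξ z.1 + ξ z.2))) :=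
        mul_nonneg (sq_nonneg _) (by linarith [Real.add_one_le_exp (l * (ξ z.1 + ξ z.2))])
      nlinarith [h1]
    rw [← hPval l hl, ← hQval]
    exact hmono
  · -- crude bound on the third moment
    intro l hl
    have habs : ∀ ω, -(|ξ ω|^3) ≤ (ξ ω)^3 := by
      intro ω
      have h := neg_abs_le ((ξ ω)^3)
      rw [abs_pow] at h
      exact h
    have h3 : -(∫ ω, |ξ ω|^3 ∂μ) ≤ ∫ ω, (ξ ω)^3 ∂μ := by
      have := integral_mono hint3.neg hintx3 (fun ω => habs ω)
      rwa [integral_neg'] at this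
    have hS : -(B * ∫ ω, (ξ ω)^2 ∂μ) ≤ ∫ ω, (ξ ω)^3 ∂μ := by linarith
    nlinarith [mul_le_mul_of_nonneg_left hS hl]
end

section
/- Let ξ₁,...,ξₙ be independent centered random variables with ξᵢ ≤ σᵢ a.s., where σᵢ² = E[ξᵢ²]. Then for all λ ≥ 0, Ψ_n(λ) = ∑ᵢ log E[e^{λξᵢ}] ≤ λ²σ²/2, where σ² = ∑ᵢ σᵢ². -/
open MeasureTheory ProbabilityTheory Real

/-!
Bennett's argument. Since `(exp x - 1 - x) / x ^ 2` is nondecreasing (it is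
`∫₀¹ (1 - τ) exp (τ x) dτ`), on `y ≤ σ` the function `exp (t y)` lies below the quadratic in `y`
that is tangent to it at `-σ` and meets it at `σ`. Taking expectations with `E ξ = 0` and
`E ξ² = σ²` gives `E exp (t ξ) ≤ cosh (t σ) ≤ exp (t² σ² / 2)`, and the cumulant bound holds
summand by summand.
-/

namespace Real

theorem exp_sub_one_sub_eq_integral (x : ℝ) :
    exp x - 1 - x = ∫ τ in (0 : ℝ)..1, x ^ 2 * ((1 - τ) * exp (τ * x)) := by
  have hderiv : ∀ τ ∈ Set.uIcc (0 : ℝ) 1, HasDerivAt (fun τ => (x * (1 - τ) + 1) * exp (τ * x))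
      (x ^ 2 * ((1 - τ) * exp (τ * x))) τ := by
    intro τ _
    have h := (((hasDerivAt_id τ).const_sub 1).const_mul x |>.add_const 1).mul
      ((hasDerivAt_id τ).mul_const x).exp
    exact h.congr_deriv (by simp only [id]; ring)
  rw [intervalIntegral.integral_eq_sub_of_hasDerivAt hderiv
    (Continuous.intervalIntegrable (by fun_prop) _ _)]
  simp
  ring

theorem monotone_integral_one_sub_mul_exp_mul :
    Monotone fun x : ℝ => ∫ τ in (0 : ℝ)..1, (1 - τ) * exp (τ * x) := by
  intro x s hxs
  refine intervalIntegral.integral_mono_on zero_le_one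
    (Continuous.intervalIntegrable (by fun_prop) _ _)
    (Continuous.intervalIntegrable (by fun_prop) _ _) ?_
  intro τ ⟨hτ₀, hτ₁⟩
  have hτx : τ * x ≤ τ * s := mul_le_mul_of_nonneg_left hxs hτ₀
  gcongr

/-- `(exp x - 1 - x) / x ^ 2` is monotone, written without division. -/
theorem sq_mul_exp_sub_one_sub_le_of_le {x s : ℝ} (h : x ≤ s) :
    s ^ 2 * (exp x - 1 - x) ≤ x ^ 2 * (exp s - 1 - s) := by
  simp only [exp_sub_one_sub_eq_integral, intervalIntegral.integral_const_mul]
  have hmono := monotone_integral_one_sub_mul_exp_mul h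
  calc s ^ 2 * (x ^ 2 * ∫ τ in (0 : ℝ)..1, (1 - τ) * exp (τ * x))
      = x ^ 2 * s ^ 2 * ∫ τ in (0 : ℝ)..1, (1 - τ) * exp (τ * x) := by ring
    _ ≤ x ^ 2 * s ^ 2 * ∫ τ in (0 : ℝ)..1, (1 - τ) * exp (τ * s) := by gcongr
    _ = _ := by ring

end Real

theorem integral_const_add_mul_add_mul_sq {Ω : Type*} [MeasurableSpace Ω] {μ : Measure Ω}
    [IsProbabilityMeasure μ] {X : Ω → ℝ} (hX : Integrable X μ)
    (hX2 : Integrable (fun ω => X ω ^ 2) μ) (c₀ c₁ c₂ : ℝ) :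
    ∫ ω, c₀ + c₁ * X ω + c₂ * X ω ^ 2 ∂μ = c₀ + c₁ * ∫ ω, X ω ∂μ + c₂ * ∫ ω, X ω ^ 2 ∂μ := by
  have hlin : Integrable (fun ω => c₀ + c₁ * X ω) μ := (integrable_const c₀).add (hX.const_mul c₁)
  rw [integral_add hlin (hX2.const_mul c₂),
    integral_add (integrable_const c₀) (hX.const_mul c₁), integral_const, integral_const_mul,
    integral_const_mul]
  simp

namespace ProbabilityTheory

variable {Ω : Type*} [MeasurableSpace Ω] {μ : Measure Ω} [IsProbabilityMeasure μ] {X : Ω → ℝ}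

theorem mgf_le_cosh_of_le_sqrt (hX : Integrable X μ) (hmean : ∫ ω, X ω ∂μ = 0)
    (hX2 : Integrable (fun ω => X ω ^ 2) μ)
    (hle : ∀ᵐ ω ∂μ, X ω ≤ √(∫ ω', X ω' ^ 2 ∂μ)) {t : ℝ} (ht : 0 ≤ t) :
    mgf X μ t ≤ cosh (t * √(∫ ω, X ω ^ 2 ∂μ)) := by
  set σ := √(∫ ω, X ω ^ 2 ∂μ)
  have hσ2 : σ ^ 2 = ∫ ω, X ω ^ 2 ∂μ := sq_sqrt (integral_nonneg fun ω => sq_nonneg (X ω))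
  set a := t * σ with ha_def
  have htX : ∀ᵐ ω ∂μ, t * X ω ≤ a := by
    filter_upwards [hle] with ω hω
    exact mul_le_mul_of_nonneg_left hω ht
  have hint : Integrable (fun ω => exp (t * X ω)) μ :=
    integrable_exp_mul_of_le t σ ht hX.aemeasurable hle
  rcases (show 0 ≤ a from mul_nonneg ht (sqrt_nonneg _)).eq_or_lt with ha | ha
  · calc mgf X μ t ≤ ∫ _, exp a ∂μ :=
          integral_mono_ae hint (integrable_const _) (htX.mono fun _ => exp_le_exp.2)
      _ = cosh a := by simp [← ha]
  set E := exp (2 * a) - 1 - 2 * a with hE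
  -- Bennett's quadratic in `y = t * X ω`: tangent to `exp y` at `y = -a`, equal to it at `y = a`.
  have hpoint : ∀ᵐ ω ∂μ, 4 * a ^ 2 * exp a * exp (t * X ω)
      ≤ (4 * a ^ 2 * (1 + a) + a ^ 2 * E) + (4 * a ^ 2 * t + 2 * a * t * E) * X ω
        + t ^ 2 * E * X ω ^ 2 := by
    filter_upwards [htX] with ω hω
    have key := sq_mul_exp_sub_one_sub_le_of_le (x := t * X ω + a) (s := 2 * a) (by linarith)
    rw [exp_add] at key
    linarith
  have hintegrated := integral_mono_ae (hint.const_mul (4 * a ^ 2 * exp a))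
    (((integrable_const _).add (hX.const_mul _)).add (hX2.const_mul _)) hpoint
  simp only [Pi.add_apply] at hintegrated
  rw [integral_const_mul, integral_const_add_mul_add_mul_sq hX hX2, hmean, ← hσ2] at hintegrated
  have hexp2 : exp (2 * a) = exp a * exp a := by rw [← exp_add, two_mul]
  have hta : t ^ 2 * σ ^ 2 = a ^ 2 := by rw [ha_def]; ring
  have hbound : 2 * a ^ 2 * (2 * exp a * mgf X μ t) ≤ 2 * a ^ 2 * (exp a * exp a + 1) := by
    rw [hE, hexp2] at hintegrated
    rw [mgf]
    linear_combination hintegrated + (exp a * exp a - 1 - 2 * a) * hta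
  have hcosh : cosh a = (exp a * exp a + 1) / (2 * exp a) := by
    rw [cosh_eq, exp_neg]
    field_simp
  rw [hcosh, le_div_iff₀ (by positivity)]
  linarith [le_of_mul_le_mul_left hbound (by positivity)]

theorem cgf_le_of_le_sqrt (hX : Integrable X μ) (hmean : ∫ ω, X ω ∂μ = 0)
    (hX2 : Integrable (fun ω => X ω ^ 2) μ)
    (hle : ∀ᵐ ω ∂μ, X ω ≤ √(∫ ω', X ω' ^ 2 ∂μ)) {t : ℝ} (ht : 0 ≤ t) :
    cgf X μ t ≤ t ^ 2 * (∫ ω, X ω ^ 2 ∂μ) / 2 := by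
  have hpos : 0 < mgf X μ t :=
    mgf_pos (integrable_exp_mul_of_le t _ ht hX.aemeasurable hle)
  rw [cgf, log_le_iff_le_exp hpos]
  calc mgf X μ t ≤ cosh (t * √(∫ ω, X ω ^ 2 ∂μ)) := mgf_le_cosh_of_le_sqrt hX hmean hX2 hle ht
    _ ≤ exp ((t * √(∫ ω, X ω ^ 2 ∂μ)) ^ 2 / 2) := cosh_le_exp_half_sq _
    _ = exp (t ^ 2 * (∫ ω, X ω ^ 2 ∂μ) / 2) := by
      rw [mul_pow, sq_sqrt (integral_nonneg fun ω => sq_nonneg (X ω))]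

end ProbabilityTheory

theorem cumulant_subgaussian_bound_general {Ω : Type*} [MeasurableSpace Ω] (μ : Measure Ω)
    [IsProbabilityMeasure μ] (n : ℕ) (ξ : Fin n → Ω → ℝ)
    (hint : ∀ i, Integrable (ξ i) μ) (hmean : ∀ i, ∫ ω, ξ i ω ∂μ = 0)
    (hint2 : ∀ i, Integrable (fun ω => (ξ i ω) ^ 2) μ)
    (hbdd : ∀ i, ∀ᵐ ω ∂μ, ξ i ω ≤ Real.sqrt (∫ ω', (ξ i ω') ^ 2 ∂μ)) :
    ∀ l : ℝ, 0 ≤ l →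
      ∑ i, Real.log (∫ ω, Real.exp (l * ξ i ω) ∂μ)
        ≤ l ^ 2 * (∑ i, ∫ ω, (ξ i ω) ^ 2 ∂μ) / 2 := by
  intro l hl
  calc ∑ i, cgf (ξ i) μ l ≤ ∑ i, l ^ 2 * (∫ ω, (ξ i ω) ^ 2 ∂μ) / 2 :=
        Finset.sum_le_sum fun i _ => cgf_le_of_le_sqrt (hint i) (hmean i) (hint2 i) (hbdd i) hl
    _ = l ^ 2 * (∑ i, ∫ ω, (ξ i ω) ^ 2 ∂μ) / 2 := by rw [Finset.mul_sum, Finset.sum_div]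

/-- Sub-Gaussian cumulant bound when each summand is bounded above by its own
standard deviation. -/
theorem cumulant_subgaussian_bound {Ω : Type*} [MeasurableSpace Ω] (μ : Measure Ω)
    [IsProbabilityMeasure μ] (n : ℕ) (ξ : Fin n → Ω → ℝ)
    (hmeas : ∀ i, Measurable (ξ i))
    (hindep : iIndepFun ξ μ)
    (hint : ∀ i, Integrable (ξ i) μ) (hmean : ∀ i, ∫ ω, ξ i ω ∂μ = 0)
    (hint2 : ∀ i, Integrable (fun ω => (ξ i ω) ^ 2) μ)
    (hbdd : ∀ i, ∀ᵐ ω ∂μ, ξ i ω ≤ Real.sqrt (∫ ω', (ξ i ω') ^ 2 ∂μ)) :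
    ∀ l : ℝ, 0 ≤ l →
      ∑ i, Real.log (∫ ω, Real.exp (l * ξ i ω) ∂μ)
        ≤ l ^ 2 * (∑ i, ∫ ω, (ξ i ω) ^ 2 ∂μ) / 2 :=
  cumulant_subgaussian_bound_general μ n ξ hint hmean hint2 hbdd
end

section
/- Let ξ₁,...,ξₙ be independent centered random variables with |ξᵢ| ≤ 1 almost surely, and σ² = ∑ᵢ E[ξᵢ²]. Then for all λ ≥ 0, B_n(λ) = ∑ᵢ E[ξᵢe^{λξᵢ}]/E[e^{λξᵢ}] ≥ (1 − e^{−λ})·e^{−λ²/2}·σ². -/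
open MeasureTheory ProbabilityTheory Real

/-!
Term by term: Hoeffding's lemma bounds the normaliser `E[e^{λξ}]` by `e^{λ²/2}`, while
`E[ξ e^{λξ}] = E[ξ (e^{λξ} - 1)] = E[∫₀^λ ξ² e^{tξ} dt] ≥ (1 - e^{-λ}) E[ξ²]`, since
`e^{tξ} ≥ e^{-t}` for `|ξ| ≤ 1`.
-/

namespace Real

lemma one_sub_exp_neg_mul_sq_le_mul_exp_mul_sub_one {l x : ℝ} (hx : |x| ≤ 1) :
    (1 - exp (-l)) * x ^ 2 ≤ x * (exp (l * x) - 1) := by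
  obtain ⟨hx₁, hx₂⟩ := abs_le.1 hx
  rcases le_total 0 x with hx₀ | hx₀
  · have hlx : l * x ≤ exp (l * x) - 1 := by linarith [add_one_le_exp (l * x)]
    have hl' : 1 - exp (-l) ≤ l := by linarith [add_one_le_exp (-l)]
    nlinarith [mul_le_mul_of_nonneg_left hlx hx₀]
  · -- on `[-1, 0]`, `exp (l * ·)` lies below its chord
    have hchord : exp (l * x) ≤ (1 + x) + -x * exp (-l) :=
      calc exp (l * x) = exp ((1 + x) • 0 + -x • -l) := by simp only [smul_eq_mul]; ring_nf
        _ ≤ (1 + x) • exp 0 + -x • exp (-l) :=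
          convexOn_exp.2 (Set.mem_univ _) (Set.mem_univ _) (by linarith) (by linarith) (by ring)
        _ = (1 + x) + -x * exp (-l) := by simp only [smul_eq_mul, exp_zero, mul_one]
    nlinarith [mul_le_mul_of_nonpos_left hchord hx₀]

end Real

namespace ProbabilityTheory

variable {Ω : Type*} [MeasurableSpace Ω] {μ : Measure Ω} [IsProbabilityMeasure μ] {X : Ω → ℝ}

lemma hasSubgaussianMGF_one_of_abs_le_one (hX : AEMeasurable X μ)
    (hbdd : ∀ᵐ ω ∂μ, |X ω| ≤ 1) (hmean : μ[X] = 0) : HasSubgaussianMGF X 1 μ := by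
  have hIcc : ∀ᵐ ω ∂μ, X ω ∈ Set.Icc (-1) 1 := by
    filter_upwards [hbdd] with ω hω using abs_le.1 hω
  convert hasSubgaussianMGF_of_mem_Icc_of_integral_eq_zero hX hIcc hmean
  ext
  norm_num

lemma one_sub_exp_neg_mul_integral_sq_le_integral_mul_exp_mul (l : ℝ) (hX : Integrable X μ)
    (hbdd : ∀ᵐ ω ∂μ, |X ω| ≤ 1) (hmean : μ[X] = 0) :
    (1 - exp (-l)) * μ[fun ω ↦ X ω ^ 2] ≤ ∫ ω, X ω * exp (l * X ω) ∂μ := by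
  have hX_bdd : ∀ᵐ ω ∂μ, ‖X ω‖ ≤ 1 := hbdd
  have hsq : Integrable (fun ω ↦ X ω ^ 2) μ := by
    simpa only [sq] using hX.bdd_mul hX.aestronglyMeasurable hX_bdd
  have hexp : Integrable (fun ω ↦ X ω * exp (l * X ω)) μ :=
    ((hasSubgaussianMGF_one_of_abs_le_one hX.aemeasurable hbdd hmean).integrable_exp_mul l).bdd_mul
      hX.aestronglyMeasurable hX_bdd
  calc (1 - exp (-l)) * μ[fun ω ↦ X ω ^ 2]
      = ∫ ω, (1 - exp (-l)) * X ω ^ 2 ∂μ := (integral_const_mul _ _).symm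
    _ ≤ ∫ ω, X ω * (exp (l * X ω) - 1) ∂μ := by
        refine integral_mono_ae (hsq.const_mul _) ?_ ?_
        · simpa only [mul_sub, mul_one, Pi.sub_def] using hexp.sub hX
        · filter_upwards [hbdd] with ω hω
          exact one_sub_exp_neg_mul_sq_le_mul_exp_mul_sub_one hω
    _ = ∫ ω, X ω * exp (l * X ω) ∂μ := by
        simp only [mul_sub, mul_one]
        rw [integral_sub hexp hX, hmean, sub_zero]

lemma le_integral_mul_exp_mul_div_mgf {l : ℝ} (hl : 0 ≤ l) (hX : Integrable X μ)
    (hbdd : ∀ᵐ ω ∂μ, |X ω| ≤ 1) (hmean : μ[X] = 0) :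
    (1 - exp (-l)) * exp (-l ^ 2 / 2) * μ[fun ω ↦ X ω ^ 2]
      ≤ (∫ ω, X ω * exp (l * X ω) ∂μ) / mgf X μ l := by
  have hsubG := hasSubgaussianMGF_one_of_abs_le_one hX.aemeasurable hbdd hmean
  have hmgf_le : mgf X μ l ≤ exp (l ^ 2 / 2) := by simpa using hsubG.mgf_le l
  have hnum := one_sub_exp_neg_mul_integral_sq_le_integral_mul_exp_mul l hX hbdd hmean
  have hnum_nonneg : 0 ≤ ∫ ω, X ω * exp (l * X ω) ∂μ := by
    refine le_trans (mul_nonneg ?_ (integral_nonneg fun _ ↦ sq_nonneg _)) hnum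
    exact sub_nonneg.2 (exp_le_one_iff.2 (neg_nonpos.2 hl))
  calc (1 - exp (-l)) * exp (-l ^ 2 / 2) * μ[fun ω ↦ X ω ^ 2]
      = (1 - exp (-l)) * μ[fun ω ↦ X ω ^ 2] / exp (l ^ 2 / 2) := by
        rw [neg_div, exp_neg (l ^ 2 / 2)]
        ring
    _ ≤ (∫ ω, X ω * exp (l * X ω) ∂μ) / mgf X μ l :=
        div_le_div₀ hnum_nonneg hnum (mgf_pos (hsubG.integrable_exp_mul l)) hmgf_le

end ProbabilityTheory

theorem tilted_mean_lower_bound_two_sided_general {Ω : Type*} [MeasurableSpace Ω] (μ : Measure Ω)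
    [IsProbabilityMeasure μ] (n : ℕ) (ξ : Fin n → Ω → ℝ)
    (hint : ∀ i, Integrable (ξ i) μ) (hmean : ∀ i, ∫ ω, ξ i ω ∂μ = 0)
    (hbdd : ∀ i, ∀ᵐ ω ∂μ, |ξ i ω| ≤ 1) :
    ∀ l : ℝ, 0 ≤ l →
      (1 - Real.exp (-l)) * Real.exp (-l ^ 2 / 2) * (∑ i, ∫ ω, (ξ i ω) ^ 2 ∂μ)
        ≤ ∑ i, (∫ ω, ξ i ω * Real.exp (l * ξ i ω) ∂μ) / (∫ ω, Real.exp (l * ξ i ω) ∂μ) := by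
  intro l hl
  rw [Finset.mul_sum]
  exact Finset.sum_le_sum fun i _ ↦ le_integral_mul_exp_mul_div_mgf hl (hint i) (hbdd i) (hmean i)

/-- Lower bound on the tilted mean for sums of independent centered random
variables with `|ξᵢ| ≤ 1`. -/
theorem tilted_mean_lower_bound_two_sided {Ω : Type*} [MeasurableSpace Ω] (μ : Measure Ω)
    [IsProbabilityMeasure μ] (n : ℕ) (ξ : Fin n → Ω → ℝ)
    (hmeas : ∀ i, Measurable (ξ i))
    (hindep : iIndepFun ξ μ)
    (hint : ∀ i, Integrable (ξ i) μ) (hmean : ∀ i, ∫ ω, ξ i ω ∂μ = 0)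
    (hbdd : ∀ i, ∀ᵐ ω ∂μ, |ξ i ω| ≤ 1) :
    ∀ l : ℝ, 0 ≤ l →
      (1 - Real.exp (-l)) * Real.exp (-l ^ 2 / 2) * (∑ i, ∫ ω, (ξ i ω) ^ 2 ∂μ)
        ≤ ∑ i, (∫ ω, ξ i ω * Real.exp (l * ξ i ω) ∂μ) / (∫ ω, Real.exp (l * ξ i ω) ∂μ) :=
  tilted_mean_lower_bound_two_sided_general μ n ξ hint hmean hbdd
end

section
/- For all x ≥ 0, Mill's ratio Θ(x) = (1 − Φ(x))·e^{x²/2} satisfies 1/(√(2π)(1+x)) ≤ Θ(x) ≤ 1/(√π·(1+x)), where Φ is the standard normal distribution function. -/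
/-!
Substituting `t = x + s` in the tail integral gives `√(2π) Θ(x) = J(x)`, where
`J = millsIntegral` is `J(x) = ∫₀^∞ e^{-xs - s²/2} ds`, and both bounds on `J` come from the convexity of `exp`.
For the lower bound write the integrand as `e^{-(1+x)s} e^{s - s²/2}` and use `e^u ≥ 1 + u`:
against the weight `e^{-(1+x)s}` the polynomial `1 + s - s²/2` integrates to
`1/(1+x) + x/(1+x)³ ≥ 1/(1+x)`.
For the upper bound, `-xs - s²/2` is the convex combination with weights `x/(1+x)` and `1/(1+x)`
of `-(1+x)s` and `-(1+x)s²/2`, so `J(x)` is at most the same combination of `∫₀^∞ e^{-(1+x)s} ds`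
and `∫₀^∞ e^{-(1+x)s²/2} ds`; with `u = √(π/(2(1+x)))` the resulting bound
`(1+x) J(x) ≤ 1 - 2u²/π + u` stays below `1 + π/8 < √2`.
-/

open MeasureTheory Real

/-- The standard normal distribution function. -/
noncomputable def stdNormalCDF (x : ℝ) : ℝ :=
  ∫ t in Set.Iic x, (Real.sqrt (2 * Real.pi))⁻¹ * Real.exp (-t ^ 2 / 2)

open Set Filter Nat

theorem integrableOn_pow_mul_exp_neg_mul_Ioi (n : ℕ) {r : ℝ} (hr : 0 < r) :
    IntegrableOn (fun t : ℝ => t ^ n * exp (-(r * t))) (Ioi 0) := by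
  have hn : (-1 : ℝ) < n := by linarith [n.cast_nonneg (α := ℝ)]
  refine (integrableOn_rpow_mul_exp_neg_mul_rpow hn one_pos hr).congr_fun (fun t _ => ?_)
    measurableSet_Ioi
  simp [rpow_natCast]

theorem integral_pow_mul_exp_neg_mul_Ioi (n : ℕ) {r : ℝ} (hr : 0 < r) :
    ∫ t in Ioi (0 : ℝ), t ^ n * exp (-(r * t)) = n ! / r ^ (n + 1) := by
  have h := integral_rpow_mul_exp_neg_mul_Ioi (a := n + 1) (by positivity) hr
  rw [Gamma_nat_eq_factorial, add_sub_cancel_right, ← Nat.cast_add_one, rpow_natCast,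
    div_pow, one_pow] at h
  simp only [rpow_natCast] at h
  rw [h]
  ring

noncomputable def millsIntegral (x : ℝ) : ℝ := ∫ s in Ioi 0, exp (-(x * s) - s ^ 2 / 2)

theorem exp_neg_mul_sub_sq_div_two (x s : ℝ) :
    exp (-(x * s) - s ^ 2 / 2) = exp (x ^ 2 / 2) * exp (-(s + x) ^ 2 / 2) := by
  rw [← exp_add]
  ring_nf

theorem integrable_exp_neg_mul_sub_sq_div_two (x : ℝ) :
    Integrable fun s : ℝ => exp (-(x * s) - s ^ 2 / 2) := by
  have h := ((integrable_exp_neg_mul_sq (b := 1 / 2) (by norm_num)).comp_add_right x).const_mul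
    (exp (x ^ 2 / 2))
  refine h.congr (Eventually.of_forall fun s => ?_)
  simp only [exp_neg_mul_sub_sq_div_two]
  ring_nf

theorem one_sub_stdNormalCDF (x : ℝ) :
    1 - stdNormalCDF x = (√(2 * π))⁻¹ * ∫ t in Ioi x, exp (-t ^ 2 / 2) := by
  have hgauss : ∫ t, exp (-t ^ 2 / 2) = √(2 * π) := by
    convert integral_gaussian (1 / 2) using 3 <;> ring_nf
  have hint : Integrable fun t : ℝ => exp (-t ^ 2 / 2) := by
    simpa [neg_div] using integrable_exp_neg_mul_sub_sq_div_two 0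
  have hsplit := integral_add_compl (measurableSet_Iic (a := x)) hint
  rw [compl_Iic, hgauss] at hsplit
  have hinv : (√(2 * π))⁻¹ * √(2 * π) = 1 := inv_mul_cancel₀ (by positivity)
  rw [stdNormalCDF, integral_const_mul]
  linear_combination -hinv - (√(2 * π))⁻¹ * hsplit

theorem one_sub_stdNormalCDF_mul_exp (x : ℝ) :
    (1 - stdNormalCDF x) * exp (x ^ 2 / 2) = millsIntegral x / √(2 * π) := by
  have hshift : ∫ t in Ioi x, exp (-t ^ 2 / 2) = ∫ s in Ioi 0, exp (-(s + x) ^ 2 / 2) := by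
    rw [← (measurePreserving_add_right volume x).setIntegral_preimage_emb
      (measurableEmbedding_addRight x), preimage_add_const_Ioi, sub_self]
  rw [one_sub_stdNormalCDF, hshift, mul_assoc, ← integral_mul_const, inv_mul_eq_div,
    millsIntegral]
  simp_rw [exp_neg_mul_sub_sq_div_two x, mul_comm (exp (x ^ 2 / 2))]

theorem inv_one_add_le_millsIntegral {x : ℝ} (hx : 0 ≤ x) : (1 + x)⁻¹ ≤ millsIntegral x := by
  have hy : 0 < 1 + x := by linarith
  set e : ℝ → ℝ := fun s => exp (-((1 + x) * s))
  have hI (n : ℕ) : IntegrableOn (fun s => s ^ n * e s) (Ioi 0) :=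
    integrableOn_pow_mul_exp_neg_mul_Ioi n hy
  have hpoly : (fun s => (1 + s - s ^ 2 / 2) * e s)
      = fun s => (s ^ 0 * e s + s ^ 1 * e s) - s ^ 2 * e s / 2 := by
    ext s; ring
  have hint : IntegrableOn (fun s => (1 + s - s ^ 2 / 2) * e s) (Ioi 0) := by
    rw [hpoly]
    exact ((hI 0).add (hI 1)).sub ((hI 2).div_const 2)
  have hval : ∫ s in Ioi 0, (1 + s - s ^ 2 / 2) * e s = (1 + x)⁻¹ + x / (1 + x) ^ 3 := by
    have hI01 : IntegrableOn (fun s => s ^ 0 * e s + s ^ 1 * e s) (Ioi 0) := (hI 0).add (hI 1)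
    have hI2 : IntegrableOn (fun s => s ^ 2 * e s / 2) (Ioi 0) := (hI 2).div_const 2
    rw [hpoly, integral_sub hI01 hI2, integral_add (hI 0) (hI 1),
      integral_div, integral_pow_mul_exp_neg_mul_Ioi 0 hy, integral_pow_mul_exp_neg_mul_Ioi 1 hy,
      integral_pow_mul_exp_neg_mul_Ioi 2 hy]
    simp only [factorial_zero, factorial_one, factorial_two, cast_one, cast_ofNat]
    field_simp
    ring
  have hpt (s : ℝ) : (1 + s - s ^ 2 / 2) * e s ≤ exp (-(x * s) - s ^ 2 / 2) :=
    calc (1 + s - s ^ 2 / 2) * e s ≤ exp (s - s ^ 2 / 2) * e s := by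
          gcongr; linarith [add_one_le_exp (s - s ^ 2 / 2)]
      _ = exp (-(x * s) - s ^ 2 / 2) := by rw [← exp_add]; ring_nf
  calc (1 + x)⁻¹ ≤ (1 + x)⁻¹ + x / (1 + x) ^ 3 := le_add_of_nonneg_right (by positivity)
    _ = ∫ s in Ioi 0, (1 + s - s ^ 2 / 2) * e s := hval.symm
    _ ≤ millsIntegral x :=
      setIntegral_mono hint (integrable_exp_neg_mul_sub_sq_div_two x).integrableOn hpt

theorem millsIntegral_le_div_sq_add_sqrt_div {x : ℝ} (hx : 0 ≤ x) :
    millsIntegral x ≤ x / (1 + x) ^ 2 + √(π / ((1 + x) / 2)) / (2 * (1 + x)) := by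
  have hy : 0 < 1 + x := by linarith
  have hlap : IntegrableOn (fun s => exp (-((1 + x) * s))) (Ioi 0) := by
    simpa using integrableOn_pow_mul_exp_neg_mul_Ioi 0 hy
  have hgauss : IntegrableOn (fun s => exp (-((1 + x) / 2) * s ^ 2)) (Ioi 0) :=
    (integrable_exp_neg_mul_sq (by positivity)).integrableOn
  have hpt (s : ℝ) : exp (-(x * s) - s ^ 2 / 2)
      ≤ x / (1 + x) * exp (-((1 + x) * s)) + 1 / (1 + x) * exp (-((1 + x) / 2) * s ^ 2) := by
    have hw : x / (1 + x) + 1 / (1 + x) = 1 := by field_simp; ring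
    have h := convexOn_exp.2 (mem_univ (-((1 + x) * s))) (mem_univ (-((1 + x) / 2) * s ^ 2))
      (by positivity) (by positivity) hw
    simp only [smul_eq_mul] at h
    refine (congrArg exp ?_).trans_le h
    field_simp
    ring
  calc millsIntegral x
      ≤ ∫ s in Ioi 0, (x / (1 + x) * exp (-((1 + x) * s))
          + 1 / (1 + x) * exp (-((1 + x) / 2) * s ^ 2)) :=
        setIntegral_mono (integrable_exp_neg_mul_sub_sq_div_two x).integrableOn
          ((hlap.const_mul _).add (hgauss.const_mul _)) hpt
    _ = x / (1 + x) ^ 2 + √(π / ((1 + x) / 2)) / (2 * (1 + x)) := by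
        rw [integral_add (hlap.const_mul _) (hgauss.const_mul _), integral_const_mul,
          integral_const_mul, integral_gaussian_Ioi]
        have := integral_pow_mul_exp_neg_mul_Ioi 0 hy
        simp only [pow_zero, one_mul, factorial_zero, cast_one, zero_add, pow_one] at this
        rw [this]
        field_simp

theorem millsIntegral_le_sqrt_two_div {x : ℝ} (hx : 0 ≤ x) : millsIntegral x ≤ √2 / (1 + x) := by
  have hy : 0 < 1 + x := by linarith
  refine (millsIntegral_le_div_sq_add_sqrt_div hx).trans ?_
  set u := √(π / ((1 + x) / 2)) / 2 with hu
  have hu2 : u ^ 2 * (1 + x) = π / 2 := by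
    rw [hu, div_pow, sq_sqrt (by positivity)]
    field_simp
  have hpi : π / 8 < √2 - 1 := by
    have : 1.41 < √2 := by rw [lt_sqrt (by norm_num)]; norm_num
    linarith [pi_lt_d2]
  have hquad : 0 ≤ u ^ 2 - π / 2 * u + π / 2 * (√2 - 1) := by
    nlinarith [sq_nonneg (u - π / 4), mul_lt_mul_of_pos_left hpi pi_pos]
  have hbound : x + u * (1 + x) ≤ √2 * (1 + x) := by
    refine le_of_mul_le_mul_left ?_ (by positivity : 0 < π / 2)
    nlinarith [mul_nonneg hquad hy.le]
  rw [show √(π / ((1 + x) / 2)) / (2 * (1 + x)) = u / (1 + x) by rw [hu]; field_simp,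
    div_add_div _ _ (by positivity) (by positivity), div_le_div_iff₀ (by positivity) hy]
  nlinarith

/-- Two-sided bound on Mill's ratio `Θ(x) = (1 - Φ(x)) e^{x²/2}`. -/
theorem mills_ratio_bounds (x : ℝ) (hx : 0 ≤ x) :
    1 / (Real.sqrt (2 * Real.pi) * (1 + x))
      ≤ (1 - stdNormalCDF x) * Real.exp (x ^ 2 / 2) ∧
    (1 - stdNormalCDF x) * Real.exp (x ^ 2 / 2)
      ≤ 1 / (Real.sqrt Real.pi * (1 + x)) := by
  rw [one_sub_stdNormalCDF_mul_exp]
  constructor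
  · calc 1 / (√(2 * π) * (1 + x)) = (1 + x)⁻¹ / √(2 * π) := by field_simp
      _ ≤ millsIntegral x / √(2 * π) := by gcongr; exact inv_one_add_le_millsIntegral hx
  · calc millsIntegral x / √(2 * π) ≤ √2 / (1 + x) / √(2 * π) := by
          gcongr; exact millsIntegral_le_sqrt_two_div hx
      _ = 1 / (√π * (1 + x)) := by rw [sqrt_mul zero_le_two π]; field_simp
end

section
/- The function Θ(x) = (1 − Φ(x))·e^{x²/2} (x ≥ 0) satisfies |Θ'(x)| ≤ 1/(√π·x²) for all x > 0, and consequently for any a, b > 0, |Θ(a) − Θ(b)| ≤ (1/√π)·|a − b| / min(a², b²). -/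
open MeasureTheory Real

/-!
Write `c = 1/√(2π)`, `T(x) = ∫_x^∞ e^{-t²/2} dt` and `J(x) = ∫_x^∞ e^{-t²/2}/t² dt`, so that
`Θ(x) = c e^{x²/2} T(x)` and `Θ'(x) = xΘ(x) - c`. Integrating `e^{-t²/2} = t e^{-t²/2} · (1/t)` by
parts gives `T(x) = e^{-x²/2}/x - J(x)`, and `0 ≤ J(x) ≤ x⁻³ ∫_x^∞ t e^{-t²/2} dt = e^{-x²/2}/x³`.
Hence `Θ'(x) = -c x e^{x²/2} J(x) ∈ [-c/x², 0]`, and `c ≤ 1/√π`. The mean value theorem on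
`[min a b, ∞)` turns the derivative bound into the Lipschitz-type estimate.
-/

open Set Filter Topology

namespace MillsRatio

lemma integrable_exp_neg_sq_div_two : Integrable fun t : ℝ => exp (-t ^ 2 / 2) := by
  simpa [neg_div, div_eq_inv_mul] using integrable_exp_neg_mul_sq (b := 1 / 2) (by norm_num)

lemma integrable_mul_exp_neg_sq_div_two : Integrable fun t : ℝ => t * exp (-t ^ 2 / 2) := by
  simpa [neg_div, div_eq_inv_mul] using integrable_mul_exp_neg_mul_sq (b := 1 / 2) (by norm_num)

lemma tendsto_exp_neg_sq_div_two_atTop : Tendsto (fun t : ℝ => exp (-t ^ 2 / 2)) atTop (𝓝 0) :=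
  tendsto_exp_atBot.comp <|
    (tendsto_neg_atBot_iff.2 (tendsto_pow_atTop two_ne_zero)).atBot_div_const two_pos

lemma exp_sq_div_two_mul_exp_neg_sq_div_two (x : ℝ) : exp (x ^ 2 / 2) * exp (-x ^ 2 / 2) = 1 := by
  rw [← exp_add, neg_div, add_neg_cancel, exp_zero]

lemma hasDerivAt_exp_neg_sq_div_two (t : ℝ) :
    HasDerivAt (fun u : ℝ => exp (-u ^ 2 / 2)) (-t * exp (-t ^ 2 / 2)) t := by
  have h : HasDerivAt (fun u : ℝ => -u ^ 2 / 2) (-t) t :=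
    ((hasDerivAt_pow 2 t).neg.div_const 2).congr_deriv (by ring)
  simpa [mul_comm] using h.exp

lemma integral_Ioi_mul_exp_neg_sq_div_two (x : ℝ) :
    ∫ t in Ioi x, t * exp (-t ^ 2 / 2) = exp (-x ^ 2 / 2) := by
  have h := integral_Ioi_of_hasDerivAt_of_tendsto' (a := x) (f := fun u => -exp (-u ^ 2 / 2))
    (fun t _ => by simpa using (hasDerivAt_exp_neg_sq_div_two t).fun_neg)
    integrable_mul_exp_neg_sq_div_two.integrableOn
    (by simpa using tendsto_exp_neg_sq_div_two_atTop.neg)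
  simpa using h

lemma integrableOn_exp_neg_sq_div_two_div_sq {x : ℝ} (hx : 0 < x) :
    IntegrableOn (fun t : ℝ => exp (-t ^ 2 / 2) / t ^ 2) (Ioi x) := by
  refine Integrable.mono' (integrable_exp_neg_sq_div_two.div_const (x ^ 2)).integrableOn
    (by fun_prop : Measurable fun t : ℝ => exp (-t ^ 2 / 2) / t ^ 2).aestronglyMeasurable ?_
  filter_upwards [ae_restrict_mem measurableSet_Ioi] with t (ht : x < t)
  rw [norm_of_nonneg (by positivity)]
  gcongr

lemma integral_Ioi_exp_neg_sq_div_two_add_integral_div_sq {x : ℝ} (hx : 0 < x) :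
    (∫ t in Ioi x, exp (-t ^ 2 / 2)) + ∫ t in Ioi x, exp (-t ^ 2 / 2) / t ^ 2
      = exp (-x ^ 2 / 2) / x := by
  have hderiv : ∀ t ∈ Ici x, HasDerivAt (fun u : ℝ => -(exp (-u ^ 2 / 2) / u))
      (exp (-t ^ 2 / 2) + exp (-t ^ 2 / 2) / t ^ 2) t := fun t (ht : x ≤ t) => by
    have ht0 : t ≠ 0 := (hx.trans_le ht).ne'
    have h := ((hasDerivAt_exp_neg_sq_div_two t).fun_div (hasDerivAt_id' t) ht0).fun_neg
    refine h.congr_deriv ?_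
    field_simp
    ring
  have htendsto : Tendsto (fun u : ℝ => -(exp (-u ^ 2 / 2) / u)) atTop (𝓝 0) := by
    simpa using (tendsto_exp_neg_sq_div_two_atTop.div_atTop tendsto_id).neg
  have h := integral_Ioi_of_hasDerivAt_of_tendsto' hderiv
    (integrable_exp_neg_sq_div_two.integrableOn.add (integrableOn_exp_neg_sq_div_two_div_sq hx))
    htendsto
  rw [integral_add integrable_exp_neg_sq_div_two.integrableOn
    (integrableOn_exp_neg_sq_div_two_div_sq hx)] at h
  linarith

lemma integral_Ioi_exp_neg_sq_div_two_div_sq_le {x : ℝ} (hx : 0 < x) :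
    ∫ t in Ioi x, exp (-t ^ 2 / 2) / t ^ 2 ≤ exp (-x ^ 2 / 2) / x ^ 3 :=
  calc ∫ t in Ioi x, exp (-t ^ 2 / 2) / t ^ 2
      ≤ ∫ t in Ioi x, t * exp (-t ^ 2 / 2) / x ^ 3 := by
        refine setIntegral_mono_on (integrableOn_exp_neg_sq_div_two_div_sq hx)
          (integrable_mul_exp_neg_sq_div_two.div_const _).integrableOn measurableSet_Ioi
          fun t (ht : x < t) => ?_
        have ht0 : 0 < t := hx.trans ht
        rw [div_le_div_iff₀ (by positivity) (by positivity)]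
        calc exp (-t ^ 2 / 2) * x ^ 3 ≤ exp (-t ^ 2 / 2) * t ^ 3 := by gcongr
          _ = t * exp (-t ^ 2 / 2) * t ^ 2 := by ring
    _ = exp (-x ^ 2 / 2) / x ^ 3 := by
        rw [integral_div, integral_Ioi_mul_exp_neg_sq_div_two]

lemma abs_mul_exp_mul_integral_Ioi_exp_neg_sq_div_two_sub_one_le {x : ℝ} (hx : 0 < x) :
    |x * exp (x ^ 2 / 2) * (∫ t in Ioi x, exp (-t ^ 2 / 2)) - 1| ≤ 1 / x ^ 2 := by
  have hJ_nonneg : 0 ≤ ∫ t in Ioi x, exp (-t ^ 2 / 2) / t ^ 2 :=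
    setIntegral_nonneg measurableSet_Ioi fun t _ => by positivity
  have hexp := exp_sq_div_two_mul_exp_neg_sq_div_two x
  have hIBP := integral_Ioi_exp_neg_sq_div_two_add_integral_div_sq hx
  set J := ∫ t in Ioi x, exp (-t ^ 2 / 2) / t ^ 2
  have hT : ∫ t in Ioi x, exp (-t ^ 2 / 2) = exp (-x ^ 2 / 2) / x - J := by linarith
  have hsub : x * exp (x ^ 2 / 2) * (∫ t in Ioi x, exp (-t ^ 2 / 2)) - 1
      = -(x * exp (x ^ 2 / 2) * J) := by
    rw [hT, ← hexp]
    field_simp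
    ring
  rw [hsub, abs_neg, abs_of_nonneg (by positivity)]
  calc x * exp (x ^ 2 / 2) * J ≤ x * exp (x ^ 2 / 2) * (exp (-x ^ 2 / 2) / x ^ 3) := by
        gcongr
        exact integral_Ioi_exp_neg_sq_div_two_div_sq_le hx
    _ = 1 / x ^ 2 := by
        rw [← hexp]
        field_simp

lemma hasDerivAt_integral_Iic {E : Type*} [NormedAddCommGroup E] [NormedSpace ℝ E]
    [CompleteSpace E] {f : ℝ → E} (hf : Integrable f) (hf_cont : Continuous f) (x : ℝ) :
    HasDerivAt (fun y => ∫ t in Iic y, f t) (f x) x := by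
  have hsplit : (fun y => ∫ t in Iic y, f t) = fun y => (∫ t in Iic 0, f t) + ∫ t in 0..y, f t := by
    funext y
    rw [← intervalIntegral.integral_Iic_sub_Iic hf.integrableOn hf.integrableOn]
    abel
  rw [hsplit]
  exact (intervalIntegral.integral_hasDerivAt_right hf.intervalIntegrable
    (hf_cont.stronglyMeasurableAtFilter _ _) hf_cont.continuousAt).const_add _

lemma integral_exp_neg_sq_div_two : ∫ t : ℝ, exp (-t ^ 2 / 2) = √(2 * π) := by
  convert integral_gaussian (1 / 2) using 3 <;> ring_nf

lemma integral_stdNormal_density : ∫ t : ℝ, (√(2 * π))⁻¹ * exp (-t ^ 2 / 2) = 1 := by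
  rw [integral_const_mul, integral_exp_neg_sq_div_two, inv_mul_cancel₀ (by positivity)]

lemma one_sub_stdNormalCDF (x : ℝ) :
    1 - stdNormalCDF x = (√(2 * π))⁻¹ * ∫ t in Ioi x, exp (-t ^ 2 / 2) := by
  have hint := integrable_exp_neg_sq_div_two.const_mul (√(2 * π))⁻¹
  have h := intervalIntegral.integral_Iic_add_Ioi (b := x) hint.integrableOn hint.integrableOn
  rw [integral_stdNormal_density] at h
  rw [stdNormalCDF, ← integral_const_mul]
  linarith

lemma hasDerivAt_stdNormalCDF (x : ℝ) :
    HasDerivAt stdNormalCDF ((√(2 * π))⁻¹ * exp (-x ^ 2 / 2)) x :=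
  hasDerivAt_integral_Iic (integrable_exp_neg_sq_div_two.const_mul _) (by fun_prop) x

noncomputable def millsRatio (x : ℝ) : ℝ := (1 - stdNormalCDF x) * exp (x ^ 2 / 2)

lemma hasDerivAt_millsRatio (x : ℝ) :
    HasDerivAt millsRatio (x * millsRatio x - (√(2 * π))⁻¹) x := by
  have hexp : HasDerivAt (fun y : ℝ => exp (y ^ 2 / 2)) (x * exp (x ^ 2 / 2)) x := by
    simpa [mul_comm] using (((hasDerivAt_pow 2 x).div_const 2).congr_deriv (by ring)).exp
  refine (((hasDerivAt_stdNormalCDF x).const_sub 1).mul hexp).congr_deriv ?_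
  rw [millsRatio]
  linear_combination -(√(2 * π))⁻¹ * exp_sq_div_two_mul_exp_neg_sq_div_two x

lemma abs_mul_millsRatio_sub_le {x : ℝ} (hx : 0 < x) :
    |x * millsRatio x - (√(2 * π))⁻¹| ≤ (√(2 * π))⁻¹ / x ^ 2 := by
  have h : x * millsRatio x - (√(2 * π))⁻¹
      = (√(2 * π))⁻¹ * (x * exp (x ^ 2 / 2) * (∫ t in Ioi x, exp (-t ^ 2 / 2)) - 1) := by
    rw [millsRatio, one_sub_stdNormalCDF]
    ring
  rw [h, abs_mul, abs_of_pos (by positivity)]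
  exact (mul_le_mul_of_nonneg_left (abs_mul_exp_mul_integral_Ioi_exp_neg_sq_div_two_sub_one_le hx)
    (by positivity)).trans_eq (mul_one_div _ _)

lemma abs_sub_le_of_abs_deriv_le_div_sq {f f' : ℝ → ℝ} {C a b : ℝ}
    (hf : ∀ x, 0 < x → HasDerivAt f (f' x) x) (hf' : ∀ x, 0 < x → |f' x| ≤ C / x ^ 2)
    (ha : 0 < a) (hb : 0 < b) :
    |f a - f b| ≤ C * |a - b| / min (a ^ 2) (b ^ 2) := by
  have hC : 0 ≤ C := by simpa using (abs_nonneg _).trans (hf' 1 one_pos)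
  have hm : 0 < min a b := lt_min ha hb
  have hbound : ∀ x ∈ Ici (min a b), ‖f' x‖ ≤ C / min a b ^ 2 := fun x (hx : min a b ≤ x) => by
    calc ‖f' x‖ ≤ C / x ^ 2 := hf' x (hm.trans_le hx)
      _ ≤ C / min a b ^ 2 := by gcongr
  have h := (convex_Ici (min a b)).norm_image_sub_le_of_norm_hasDerivWithin_le
    (fun x (hx : min a b ≤ x) => (hf x (hm.trans_le hx)).hasDerivWithinAt) hbound
    (min_le_right a b) (min_le_left a b)
  rw [← pow_left_monotoneOn.map_min (mem_Ici.2 ha.le) (mem_Ici.2 hb.le), mul_div_right_comm]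
  simpa only [Real.norm_eq_abs] using h

end MillsRatio

open MillsRatio

/-- Derivative bound for Mill's ratio and the resulting Lipschitz-type estimate. -/
theorem mills_ratio_deriv_bound :
    (∀ x : ℝ, 0 < x →
      |deriv (fun y : ℝ => (1 - stdNormalCDF y) * Real.exp (y ^ 2 / 2)) x|
        ≤ 1 / (Real.sqrt Real.pi * x ^ 2)) ∧
    ∀ a b : ℝ, 0 < a → 0 < b →
      |(1 - stdNormalCDF a) * Real.exp (a ^ 2 / 2)
          - (1 - stdNormalCDF b) * Real.exp (b ^ 2 / 2)|
        ≤ (1 / Real.sqrt Real.pi) * |a - b| / min (a ^ 2) (b ^ 2) := by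
  have hc : (√(2 * π))⁻¹ ≤ 1 / √π := by
    rw [one_div]
    gcongr
    linarith [pi_pos]
  have hderiv : ∀ x, 0 < x → |x * millsRatio x - (√(2 * π))⁻¹| ≤ 1 / √π / x ^ 2 :=
    fun x hx => (abs_mul_millsRatio_sub_le hx).trans (by gcongr)
  refine ⟨fun x hx => ?_, fun a b ha hb => ?_⟩
  · change |deriv millsRatio x| ≤ _
    rw [← div_div, (hasDerivAt_millsRatio x).deriv]
    exact hderiv x hx
  · exact abs_sub_le_of_abs_deriv_le_div_sq (fun x _ => hasDerivAt_millsRatio x) hderiv ha hb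
end

section
/- Let ξ₁,...,ξₙ be independent centered random variables with ξᵢ ≤ 1 a.s., σ² = ∑ᵢE[ξᵢ²] > 0, and S_n = ∑ξᵢ. Then for all x ≥ 0, inf_{λ≥0} E[e^{λ(S_n − xσ)}] ≤ H_n(x,σ), where H_n(x,σ) = { (σ/(x+σ))^{xσ+σ²} · (n/(n−xσ))^{n−xσ} }^{n/(n+σ²)} for 0 ≤ x ≤ n/σ (with the convention (n/(n−xσ))^{n−xσ} = 1 when xσ = n), and H_n(x,σ) = 0 for x > n/σ; in particular P(S_n ≥ xσ) ≤ H_n(x,σ). -/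
open MeasureTheory ProbabilityTheory Real
open Filter Topology

/-!
For `t ≤ 1` and `λ ≥ 0`, `e^{λt}` lies below the parabola tangent to it at `t = -c` and meeting it
at `t = 1`, because `(e^u - 1 - u) / u²` is increasing. With `c = σ² / n` for every summand, this
bounds `E e^{λξᵢ}` by an affine function of `E ξᵢ²` whose value at `E ξᵢ² = c` is the moment
generating function `M(λ)` of the centred two-point law on `{-c, 1}`; independence and AM-GM give
`E e^{λ S_n} ≤ M(λ)^n`. Minimising `e^{-λxσ} M(λ)^n` over `λ ≥ 0` yields `H_n(x, σ)`, at an explicit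
`λ` when `xσ < n` and as `λ → ∞` otherwise, and Markov's inequality turns it into the tail bound.
-/

/-- Hoeffding's function `H_n(x, σ)`, with the convention
`(n/(n - xσ))^{n - xσ} = 1` when `xσ = n` (automatic via `rpow`), and
`H_n(x, σ) = 0` for `x > n/σ`. -/
noncomputable def hoeffdingFn (n : ℕ) (x σ : ℝ) : ℝ :=
  if x ≤ n / σ then
    ((σ / (x + σ)) ^ (x * σ + σ ^ 2) *
      ((n : ℝ) / ((n : ℝ) - x * σ)) ^ ((n : ℝ) - x * σ)) ^ ((n : ℝ) / ((n : ℝ) + σ ^ 2))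
  else 0

lemma exp_sub_one_sub_eq_sq_mul_integral (x : ℝ) :
    exp x - 1 - x = x ^ 2 * ∫ s in (0 : ℝ)..1, (1 - s) * exp (s * x) := by
  rcases eq_or_ne x 0 with rfl | hx
  · simp
  have hderiv : ∀ s ∈ Set.uIcc (0 : ℝ) 1, HasDerivAt
      (fun s ↦ (1 - s) * exp (s * x) / x + exp (s * x) / x ^ 2) ((1 - s) * exp (s * x)) s := by
    intro s _
    have hexp : HasDerivAt (fun s ↦ exp (s * x)) (exp (s * x) * x) s := by
      simpa using ((hasDerivAt_id s).mul_const x).exp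
    have hlin : HasDerivAt (fun s : ℝ ↦ 1 - s) (-1) s := by
      simpa using (hasDerivAt_id s).const_sub 1
    refine (((hlin.mul hexp).div_const x).add (hexp.div_const (x ^ 2))).congr_deriv ?_
    field_simp
    ring
  rw [intervalIntegral.integral_eq_sub_of_hasDerivAt hderiv
    (Continuous.intervalIntegrable (by fun_prop) _ _)]
  simp only [zero_mul, exp_zero, one_mul, sub_self]
  field_simp
  ring

lemma sq_mul_exp_mul_sub_one_sub_le {l u v : ℝ} (hl : 0 ≤ l) (huv : u ≤ v) :
    v ^ 2 * (exp (l * u) - 1 - l * u) ≤ u ^ 2 * (exp (l * v) - 1 - l * v) := by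
  rw [exp_sub_one_sub_eq_sq_mul_integral, exp_sub_one_sub_eq_sq_mul_integral]
  have hmono : ∫ s in (0 : ℝ)..1, (1 - s) * exp (s * (l * u))
      ≤ ∫ s in (0 : ℝ)..1, (1 - s) * exp (s * (l * v)) := by
    refine intervalIntegral.integral_mono_on zero_le_one
      (Continuous.intervalIntegrable (by fun_prop) _ _)
      (Continuous.intervalIntegrable (by fun_prop) _ _) ?_
    intro s ⟨hs0, hs1⟩
    gcongr
  have := mul_le_mul_of_nonneg_left hmono (sq_nonneg (l * u * v))
  linarith

lemma exp_mul_le_quadratic_of_le {a b t l : ℝ} (hl : 0 ≤ l) (hab : a < b) (htb : t ≤ b) :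
    exp (l * t) ≤ exp (l * a) * (1 + l * (t - a)
      + (t - a) ^ 2 * ((exp (l * (b - a)) - 1 - l * (b - a)) / (b - a) ^ 2)) := by
  have hmono := sq_mul_exp_mul_sub_one_sub_le hl (sub_le_sub_right htb a)
  rw [show exp (l * t) = exp (l * a) * exp (l * (t - a)) by rw [← exp_add]; ring_nf]
  gcongr
  rw [mul_div_assoc', ← sub_le_iff_le_add', le_div_iff₀ (by nlinarith)]
  linarith

/-- The moment generating function at `l` of the centred law on `{-c, 1}`, whose variance is `c`. -/
noncomputable def twoPointMgf (c l : ℝ) : ℝ :=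
  (c * exp l + exp (-(l * c))) / (1 + c)

section Probability

variable {Ω : Type*} [MeasurableSpace Ω] {μ : Measure Ω}

lemma mgf_le_twoPointMgf_add [IsProbabilityMeasure μ] {X : Ω → ℝ} (hint : Integrable X μ)
    (hmean : ∫ ω, X ω ∂μ = 0) (hbdd : ∀ᵐ ω ∂μ, X ω ≤ 1)
    (hint2 : Integrable (fun ω ↦ X ω ^ 2) μ) {c l : ℝ} (hc : 0 ≤ c) (hl : 0 ≤ l) :
    mgf X μ l ≤ twoPointMgf c l + exp (-(l * c)) *
      ((exp (l * (1 + c)) - 1 - l * (1 + c)) / (1 + c) ^ 2) * (∫ ω, X ω ^ 2 ∂μ - c) := by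
  set κ := (exp (l * (1 + c)) - 1 - l * (1 + c)) / (1 + c) ^ 2
  set E := exp (-(l * c))
  have hpt : ∀ᵐ ω ∂μ, exp (l * X ω) ≤
      E * (1 + l * c + κ * c ^ 2) + E * (l + 2 * κ * c) * X ω + E * κ * X ω ^ 2 := by
    filter_upwards [hbdd] with ω hω
    have := exp_mul_le_quadratic_of_le (a := -c) hl (by linarith) hω
    rw [sub_neg_eq_add, sub_neg_eq_add, mul_neg] at this
    exact this.trans_eq (by ring)
  have hlin : Integrable (fun ω ↦ E * (1 + l * c + κ * c ^ 2) + E * (l + 2 * κ * c) * X ω) μ :=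
    (integrable_const _).add (hint.const_mul _)
  calc mgf X μ l
      ≤ ∫ ω, (E * (1 + l * c + κ * c ^ 2) + E * (l + 2 * κ * c) * X ω + E * κ * X ω ^ 2) ∂μ :=
        integral_mono_ae (integrable_exp_mul_of_le l 1 hl hint.aemeasurable hbdd)
          (hlin.add (hint2.const_mul _)) hpt
    _ = E * (1 + l * c + κ * c ^ 2) + E * κ * ∫ ω, X ω ^ 2 ∂μ := by
        rw [integral_add hlin (hint2.const_mul _),
          integral_add (integrable_const _) (hint.const_mul _), integral_const_mul,
          integral_const_mul, hmean, integral_const_mul]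
        simp
    _ = twoPointMgf c l + E * κ * (∫ ω, X ω ^ 2 ∂μ - c) := by
        have h1c : exp (l * (1 + c)) = exp l / exp (-(l * c)) := by
          rw [← exp_sub]; ring_nf
        have : 0 < 1 + c := by linarith
        simp only [twoPointMgf, κ, E, h1c]
        field_simp
        ring

lemma prod_le_pow_card_of_sum_le {ι : Type*} [Fintype ι] {z : ι → ℝ} {m : ℝ}
    (hz : ∀ i, 0 ≤ z i) (hsum : ∑ i, z i ≤ Fintype.card ι * m) :
    ∏ i, z i ≤ m ^ Fintype.card ι := by
  set N := Fintype.card ι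
  rcases Nat.eq_zero_or_pos N with hN | hN
  · have : IsEmpty ι := Fintype.card_eq_zero_iff.mp hN
    simp [hN]
  have hN' : (0 : ℝ) < N := by exact_mod_cast hN
  have hgm := geom_mean_le_arith_mean_weighted Finset.univ (fun _ ↦ (N : ℝ)⁻¹) z
    (fun _ _ ↦ by positivity)
    (by rw [Finset.sum_const, Finset.card_univ, nsmul_eq_mul, mul_inv_cancel₀ hN'.ne'])
    (fun i _ ↦ hz i)
  have hmean : ∑ i, (N : ℝ)⁻¹ * z i ≤ m := by
    rw [← Finset.mul_sum, inv_mul_le_iff₀ hN']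
    exact hsum
  calc ∏ i, z i = (∏ i, z i ^ (N : ℝ)⁻¹) ^ N := by
        rw [← Finset.prod_pow]
        exact Finset.prod_congr rfl fun i _ ↦ (rpow_inv_natCast_pow (hz i) hN.ne').symm
    _ ≤ m ^ N :=
        pow_le_pow_left₀ (Finset.prod_nonneg fun i _ ↦ rpow_nonneg (hz i) _) (hgm.trans hmean) N

lemma mgf_sum_le_twoPointMgf_pow {ι : Type*} [Fintype ι] {ξ : ι → Ω → ℝ}
    (hindep : iIndepFun ξ μ) (hint : ∀ i, Integrable (ξ i) μ)
    (hmean : ∀ i, ∫ ω, ξ i ω ∂μ = 0) (hbdd : ∀ i, ∀ᵐ ω ∂μ, ξ i ω ≤ 1)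
    (hint2 : ∀ i, Integrable (fun ω ↦ ξ i ω ^ 2) μ) {c l : ℝ} (hc : 0 ≤ c) (hl : 0 ≤ l)
    (hvar : ∑ i, ∫ ω, ξ i ω ^ 2 ∂μ = Fintype.card ι * c) :
    mgf (fun ω ↦ ∑ i, ξ i ω) μ l ≤ twoPointMgf c l ^ Fintype.card ι := by
  have := hindep.isProbabilityMeasure
  have hξ i := mgf_le_twoPointMgf_add (hint i) (hmean i) (hbdd i) (hint2 i) hc hl
  rw [← Finset.sum_fn, hindep.mgf_sum₀ (fun i ↦ (hint i).aemeasurable)]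
  refine (Finset.prod_le_prod (fun i _ ↦ mgf_nonneg) (fun i _ ↦ hξ i)).trans
    (prod_le_pow_card_of_sum_le (fun i ↦ mgf_nonneg.trans (hξ i)) ?_)
  rw [Finset.sum_add_distrib, ← Finset.mul_sum, Finset.sum_sub_distrib, hvar]
  simp

lemma integral_exp_mul_sub_eq_exp_mul_mgf (X : Ω → ℝ) (μ : Measure Ω) (l s : ℝ) :
    ∫ ω, exp (l * (X ω - s)) ∂μ = exp (-(l * s)) * mgf X μ l := by
  rw [mgf, ← integral_const_mul]
  congr 1 with ω
  rw [← exp_add]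
  ring_nf

lemma measureReal_ge_le_integral_exp_mul_sub [IsFiniteMeasure μ] {X : Ω → ℝ} {l : ℝ} (s : ℝ)
    (hl : 0 ≤ l) (hint : Integrable (fun ω ↦ exp (l * X ω)) μ) :
    μ.real {ω | s ≤ X ω} ≤ ∫ ω, exp (l * (X ω - s)) ∂μ := by
  rw [integral_exp_mul_sub_eq_exp_mul_mgf, ← neg_mul]
  exact measure_ge_le_exp_mul_mgf s hl hint

end Probability

section Optimization

variable {n : ℕ} {x σ : ℝ}

lemma hoeffdingFn_eq_exp_of_mul_lt (hσ : 0 < σ) (hx : 0 ≤ x) (hxσ : x * σ < n) :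
    hoeffdingFn n x σ = exp ((log (σ / (x + σ)) * (x * σ + σ ^ 2)
      + log (n / (n - x * σ)) * (n - x * σ)) * (n / (n + σ ^ 2))) := by
  have hle : x ≤ n / σ := by rw [le_div_iff₀ hσ]; exact hxσ.le
  have hnxσ : 0 < (n : ℝ) - x * σ := by linarith
  rw [hoeffdingFn, if_pos hle, rpow_def_of_pos (by positivity : 0 < σ / (x + σ)),
    rpow_def_of_pos (div_pos (by linarith [mul_nonneg hx hσ.le]) hnxσ), ← exp_add,
    rpow_def_of_pos (exp_pos _), log_exp]

lemma exists_exp_mul_twoPointMgf_pow_eq_hoeffdingFn (hσ : 0 < σ) (hx : 0 ≤ x)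
    (hxσ : x * σ < n) :
    ∃ l, 0 ≤ l ∧ exp (-(l * (x * σ))) * twoPointMgf (σ ^ 2 / n) l ^ n = hoeffdingFn n x σ := by
  have hxσ0 : 0 ≤ x * σ := mul_nonneg hx hσ.le
  have hn : (0 : ℝ) < n := by linarith
  have hnxσ : 0 < (n : ℝ) - x * σ := by linarith
  rw [hoeffdingFn_eq_exp_of_mul_lt hσ hx hxσ]
  set c := σ ^ 2 / n with hc
  have hc1 : 0 < 1 + c := by positivity
  set P := log (σ / (x + σ))
  set Q := log (n / (n - x * σ))
  have heP : exp P = σ / (x + σ) := exp_log (by positivity)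
  have heQ : exp Q = n / (n - x * σ) := exp_log (by positivity)
  have hP : P ≤ 0 := log_nonpos (by positivity) (by rw [div_le_one (by positivity)]; linarith)
  have hQ : 0 ≤ Q := log_nonneg (by rw [le_div_iff₀ hnxσ]; linarith)
  -- the minimiser: `exp (l * (1 + c)) = (n / (n - x * σ)) * ((x + σ) / σ)`
  set l := (Q - P) / (1 + c)
  refine ⟨l, div_nonneg (by linarith) hc1.le, ?_⟩
  have hkey : c * (exp Q / exp P) + 1 = (1 + c) * exp Q := by
    have hcQP : c * (exp Q / exp P) = σ * (x + σ) / (n - x * σ) := by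
      rw [heP, heQ, hc]
      field_simp
    rw [hcQP, div_add_one hnxσ.ne', heQ, hc, one_add_div hn.ne', div_mul_div_cancel₀ hn.ne']
    ring_nf
  have hl : exp l = exp Q / exp P * exp (-(l * c)) := by
    rw [← exp_sub, ← exp_add]
    congr 1
    simp only [l]
    field_simp
    ring
  have hM : twoPointMgf c l = exp (Q - l * c) := by
    rw [twoPointMgf, hl, sub_eq_add_neg Q, exp_add Q, div_eq_iff hc1.ne']
    linear_combination exp (-(l * c)) * hkey
  rw [hM, ← exp_nat_mul, ← exp_add]
  congr 1
  simp only [l, hc]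
  field_simp
  ring

lemma exp_mul_twoPointMgf_pow_eq (hn : n ≠ 0) (c l s : ℝ) :
    exp (-(l * s)) * twoPointMgf c l ^ n
      = ((c * exp (-(l * (s / n - 1))) + exp (-(l * (c + s / n)))) / (1 + c)) ^ n := by
  have hn' : (n : ℝ) ≠ 0 := by exact_mod_cast hn
  rw [show exp (-(l * s)) = exp (-(l * (s / n))) ^ n by rw [← exp_nat_mul]; field_simp,
    ← mul_pow, twoPointMgf, mul_div_assoc', mul_add, mul_left_comm, ← exp_add, ← exp_add]
  ring_nf

lemma tendsto_exp_neg_mul_atTop {a : ℝ} (ha : 0 < a) :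
    Tendsto (fun l ↦ exp (-(l * a))) atTop (𝓝 0) :=
  tendsto_exp_neg_atTop_nhds_zero.comp (tendsto_id.atTop_mul_const ha)

lemma hoeffdingFn_of_mul_eq (hn : 0 < n) (hσ : 0 < σ) (hxσ : x * σ = n) :
    hoeffdingFn n x σ = (σ ^ 2 / n / (1 + σ ^ 2 / n)) ^ n := by
  have hn' : (0 : ℝ) < n := by exact_mod_cast hn
  have hx : x = n / σ := by rw [eq_div_iff hσ.ne', hxσ]
  have hx0 : 0 ≤ x := hx ▸ by positivity
  rw [hoeffdingFn, if_pos hx.le, hxσ, sub_self, rpow_zero, mul_one,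
    ← rpow_mul (div_nonneg hσ.le (by linarith)), mul_div_cancel₀ _ (by positivity), rpow_natCast,
    hx]
  congr 1
  field_simp

lemma hoeffdingFn_of_lt_mul (hσ : 0 < σ) (hxσ : n < x * σ) : hoeffdingFn n x σ = 0 := by
  rw [hoeffdingFn, if_neg (not_le.mpr ((div_lt_iff₀ hσ).mpr hxσ))]

lemma tendsto_exp_mul_twoPointMgf_pow_hoeffdingFn (hn : 0 < n) (hσ : 0 < σ) (hxσ : n ≤ x * σ) :
    Tendsto (fun l ↦ exp (-(l * (x * σ))) * twoPointMgf (σ ^ 2 / n) l ^ n) atTop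
      (𝓝 (hoeffdingFn n x σ)) := by
  have hn' : (0 : ℝ) < n := by exact_mod_cast hn
  have hc : 0 < σ ^ 2 / n := by positivity
  simp_rw [exp_mul_twoPointMgf_pow_eq hn.ne']
  rcases hxσ.eq_or_lt with heq | hlt
  · rw [hoeffdingFn_of_mul_eq hn hσ heq.symm, ← heq, div_self hn'.ne', sub_self]
    have hlast := tendsto_exp_neg_mul_atTop (add_pos hc one_pos)
    simpa using
      ((tendsto_const_nhds (x := σ ^ 2 / n)).add hlast |>.div_const (1 + σ ^ 2 / n)).pow n
  · rw [hoeffdingFn_of_lt_mul hσ hlt]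
    have hlast := tendsto_exp_neg_mul_atTop (add_pos hc (div_pos (hn'.trans hlt) hn'))
    have hfirst := tendsto_exp_neg_mul_atTop (a := x * σ / n - 1)
      (by rw [sub_pos, one_lt_div hn']; exact hlt)
    simpa [hn.ne'] using (((hfirst.const_mul _).add hlast).div_const _).pow n

lemma le_hoeffdingFn_of_forall_le (hn : 0 < n) (hσ : 0 < σ) (hx : 0 ≤ x) {L : ℝ}
    (h : ∀ l, 0 ≤ l → L ≤ exp (-(l * (x * σ))) * twoPointMgf (σ ^ 2 / n) l ^ n) :
    L ≤ hoeffdingFn n x σ := by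
  rcases lt_or_ge (x * σ) n with hlt | hge
  · obtain ⟨l, hl, heq⟩ := exists_exp_mul_twoPointMgf_pow_eq_hoeffdingFn hσ hx hlt
    exact heq ▸ h l hl
  · exact ge_of_tendsto (tendsto_exp_mul_twoPointMgf_pow_hoeffdingFn hn hσ hge)
      ((eventually_ge_atTop 0).mono h)

end Optimization

theorem hoeffding_inequality_general {Ω : Type*} [MeasurableSpace Ω] (μ : Measure Ω)
    (n : ℕ) (ξ : Fin n → Ω → ℝ) (σ : ℝ) (hσ : 0 < σ)
    (hindep : iIndepFun ξ μ)
    (hint : ∀ i, Integrable (ξ i) μ) (hmean : ∀ i, ∫ ω, ξ i ω ∂μ = 0)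
    (hbdd : ∀ i, ∀ᵐ ω ∂μ, ξ i ω ≤ 1)
    (hint2 : ∀ i, Integrable (fun ω => (ξ i ω) ^ 2) μ)
    (hσ2 : σ ^ 2 = ∑ i, ∫ ω, (ξ i ω) ^ 2 ∂μ) :
    ∀ x : ℝ, 0 ≤ x →
      sInf {y : ℝ | ∃ l : ℝ, 0 ≤ l ∧
          y = ∫ ω, Real.exp (l * ((∑ i, ξ i ω) - x * σ)) ∂μ}
        ≤ hoeffdingFn n x σ ∧
      (μ {ω | x * σ ≤ ∑ i, ξ i ω}).toReal ≤ hoeffdingFn n x σ := by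
  intro x hx
  have := hindep.isProbabilityMeasure
  have hn : 0 < n := Nat.pos_of_ne_zero fun hn ↦ by subst hn; simp at hσ2; linarith
  set Y := {y : ℝ | ∃ l : ℝ, 0 ≤ l ∧ y = ∫ ω, Real.exp (l * ((∑ i, ξ i ω) - x * σ)) ∂μ}
  have hchernoff (l : ℝ) (hl : 0 ≤ l) : ∫ ω, exp (l * ((∑ i, ξ i ω) - x * σ)) ∂μ
      ≤ exp (-(l * (x * σ))) * twoPointMgf (σ ^ 2 / n) l ^ n := by
    have hmgf := mgf_sum_le_twoPointMgf_pow (c := σ ^ 2 / n) hindep hint hmean hbdd hint2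
      (by positivity) hl (by rw [Fintype.card_fin, ← hσ2]; field_simp)
    rw [Fintype.card_fin] at hmgf
    rw [integral_exp_mul_sub_eq_exp_mul_mgf]
    gcongr
  have hbddBelow : BddBelow Y :=
    ⟨0, by rintro _ ⟨l, -, rfl⟩; exact integral_nonneg fun ω ↦ (exp_pos _).le⟩
  have hinf : sInf Y ≤ hoeffdingFn n x σ := le_hoeffdingFn_of_forall_le hn hσ hx fun l hl ↦
    (csInf_le hbddBelow ⟨l, hl, rfl⟩).trans (hchernoff l hl)
  refine ⟨hinf, le_trans ?_ hinf⟩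
  refine le_csInf ⟨_, 0, le_rfl, rfl⟩ ?_
  rintro _ ⟨l, hl, rfl⟩
  refine measureReal_ge_le_integral_exp_mul_sub _ hl (integrable_exp_mul_of_le l n hl ?_ ?_)
  · fun_prop (disch := exact fun i ↦ (hint i).aemeasurable)
  · filter_upwards [ae_all_iff.2 hbdd] with ω hω
    simpa using Finset.sum_le_sum (s := Finset.univ) fun i _ ↦ hω i

/-- Hoeffding's inequality: the Chernoff bound, hence the tail probability, is
bounded by Hoeffding's function. -/
theorem hoeffding_inequality {Ω : Type*} [MeasurableSpace Ω] (μ : Measure Ω)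
    [IsProbabilityMeasure μ] (n : ℕ) (ξ : Fin n → Ω → ℝ) (σ : ℝ) (hσ : 0 < σ)
    (hmeas : ∀ i, Measurable (ξ i))
    (hindep : iIndepFun ξ μ)
    (hint : ∀ i, Integrable (ξ i) μ) (hmean : ∀ i, ∫ ω, ξ i ω ∂μ = 0)
    (hbdd : ∀ i, ∀ᵐ ω ∂μ, ξ i ω ≤ 1)
    (hint2 : ∀ i, Integrable (fun ω => (ξ i ω) ^ 2) μ)
    (hσ2 : σ ^ 2 = ∑ i, ∫ ω, (ξ i ω) ^ 2 ∂μ) :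
    ∀ x : ℝ, 0 ≤ x →
      sInf {y : ℝ | ∃ l : ℝ, 0 ≤ l ∧
          y = ∫ ω, Real.exp (l * ((∑ i, ξ i ω) - x * σ)) ∂μ}
        ≤ hoeffdingFn n x σ ∧
      (μ {ω | x * σ ≤ ∑ i, ξ i ω}).toReal ≤ hoeffdingFn n x σ :=
  hoeffding_inequality_general μ n ξ σ hσ hindep hint hmean hbdd hint2 hσ2
end
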